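/- arXiv:0810.3030 — 6 statements merged into one kernel-verified Lean document; each statement's English description precedes it below -/
import Mathlib

section
/- Every abelian group G of cardinality at most 𝔠 (the cardinality of the continuum) admits a separable metrizable Hausdorff group topology, i.e. a topology on G making it a topological group whose underlying space is metrizable and has a countable dense subset. -/
open Cardinal

noncomputable section SepMetrAux

abbrev TT : Type := AddCircle (1:ℝ)
abbrev HH : Type := ℝ × (ℕ → TT)

private lemma hfst_zsmul (k : ℤ) (p : HH) : (k • p).1 = k • p.1 :=
  map_zsmul (AddMonoidHom.fst ℝ (ℕ → TT)) k p

private lemma hsnd_zsmul (k : ℤ) (p : HH) (n : ℕ) : (k • p).2 n = k • p.2 n := by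
  have h1 : (k • p).2 = k • p.2 := map_zsmul (AddMonoidHom.snd ℝ (ℕ → TT)) k p
  have h2 : (k • p.2) n = k • p.2 n := map_zsmul (Pi.evalAddMonoidHom (fun _ : ℕ => TT) n) k p.2
  rw [h1, h2]

private lemma theta_eq_zero_iff {m : ℕ} (hm : 2 ≤ m) (k : ℤ) :
    k • ((((m:ℝ)⁻¹ : ℝ)) : TT) = 0 ↔ (m:ℤ) ∣ k := by
  have hm0 : (m:ℝ) ≠ 0 := by
    have : (0:ℕ) < m := by omega
    exact_mod_cast this.ne'
  rw [← QuotientAddGroup.mk_zsmul, QuotientAddGroup.eq_zero_iff,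
    AddSubgroup.mem_zmultiples_iff]
  constructor
  · rintro ⟨t, ht⟩
    refine ⟨t, ?_⟩
    have h1 : (t:ℝ) = (k:ℝ) * (m:ℝ)⁻¹ := by simpa [zsmul_eq_mul] using ht
    have h2 : (k:ℝ) = (m:ℝ) * t := by field_simp at h1; linarith
    exact_mod_cast h2
  · rintro ⟨t, rfl⟩
    refine ⟨t, ?_⟩
    push_cast [zsmul_eq_mul]
    field_simp

private lemma exists_notin_of_mk_lt {α : Type} (S : Set α) (h : #S < #α) :
    ∃ a : α, a ∉ S := by
  by_contra hc
  push_neg at hc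
  have : S = Set.univ := Set.eq_univ_of_forall hc
  rw [this] at h
  simp at h

private lemma key0 (R : AddSubgroup HH) (hR : #R < continuum.{0}) :
    ∃ h : HH, ∀ k : ℤ, k ≠ 0 → k • h ∉ R := by
  classical
  set e : ℝ → HH := fun t => (t, 0) with he
  set Bad : Set ℝ := {t | ∃ k : ℤ, k ≠ 0 ∧ k • e t ∈ R} with hBad
  have hlt : #Bad < #ℝ := by
    have hinj : ∃ F : Bad → ℤ × R, Function.Injective F := by
      choose k hk0 hkR using fun v : Bad => v.2
      refine ⟨fun v => (k v, ⟨k v • e v.1, hkR v⟩), ?_⟩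
      rintro v w hvw
      simp only [Prod.mk.injEq, Subtype.mk.injEq] at hvw
      obtain ⟨hk, hr'⟩ := hvw
      rw [hk] at hr'
      have h1 : (k w • e v.1).1 = (k w • e w.1).1 := by rw [hr']
      rw [hfst_zsmul, hfst_zsmul] at h1
      simp only [he, zsmul_eq_mul] at h1
      have hkw : (k w : ℝ) ≠ 0 := Int.cast_ne_zero.mpr (hk0 w)
      exact Subtype.ext (mul_left_cancel₀ hkw h1)
    obtain ⟨F, hF⟩ := hinj
    have h1 : #Bad ≤ #(ℤ × R) := Cardinal.mk_le_of_injective hF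
    have h2 : #(ℤ × R) < continuum.{0} := by
      rw [Cardinal.mk_prod, Cardinal.lift_id, Cardinal.lift_id, Cardinal.mk_int]
      exact Cardinal.mul_lt_of_lt Cardinal.aleph0_le_continuum
        Cardinal.aleph0_lt_continuum hR
    rw [Cardinal.mk_real]
    exact lt_of_le_of_lt h1 h2
  obtain ⟨t, ht⟩ := exists_notin_of_mk_lt Bad hlt
  exact ⟨e t, fun k hk hmem => ht ⟨k, hk, hmem⟩⟩

private lemma key2 (R : AddSubgroup HH) (hR : #R < continuum.{0}) {m : ℕ} (hm : 2 ≤ m)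
    (b : HH) :
    ∃ h : HH, (m:ℤ) • h = b ∧ ∀ k : ℤ, ¬ (m:ℤ) ∣ k → k • h ∉ R := by
  classical
  set θ : TT := ((((m:ℝ)⁻¹ : ℝ)) : TT) with hθdef
  have hθ : ∀ k : ℤ, k • θ = 0 ↔ (m:ℤ) ∣ k := theta_eq_zero_iff hm
  have hmz : (m:ℤ) ≠ 0 := by exact_mod_cast (by omega : m ≠ 0)
  set h₀ : HH := DivisibleBy.div b (m:ℤ) with hh₀def
  have hh₀ : (m:ℤ) • h₀ = b := DivisibleBy.div_cancel b hmz
  set u : (ℕ → Bool) → HH := fun v => (0, fun n => if v n then θ else 0) with hu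
  have husmul : ∀ (k : ℤ) (v : ℕ → Bool) (n : ℕ),
      (k • u v).2 n = (if v n then k • θ else 0) := by
    intro k v n
    rw [hsnd_zsmul]
    by_cases h : v n <;> simp [hu, h]
  have hufst : ∀ (k : ℤ) (v : ℕ → Bool), (k • u v).1 = 0 := by
    intro k v
    rw [hfst_zsmul]
    simp [hu]
  set Bad : Set (ℕ → Bool) := {v | ∃ k : ℤ, ¬ (m:ℤ) ∣ k ∧ k • (h₀ + u v) ∈ R} with hBad
  have hlt : #Bad < #(ℕ → Bool) := by
    have hinj : ∃ F : Bad → ℤ × R, Function.Injective F := by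
      choose k hk0 hkR using fun v : Bad => v.2
      refine ⟨fun v => (k v, ⟨k v • (h₀ + u v.1), hkR v⟩), ?_⟩
      rintro v w hvw
      simp only [Prod.mk.injEq, Subtype.mk.injEq] at hvw
      obtain ⟨hk, hr'⟩ := hvw
      rw [hk] at hr'
      have hu' : k w • u v.1 = k w • u w.1 := by
        rw [smul_add, smul_add] at hr'
        exact add_left_cancel hr'
      have hθne : k w • θ ≠ 0 := fun hz => hk0 w ((hθ (k w)).mp hz)
      apply Subtype.ext
      funext n
      have h2 : (k w • u v.1).2 n = (k w • u w.1).2 n := by rw [hu']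
      rw [husmul, husmul] at h2
      by_cases h3 : v.1 n = true <;> by_cases h4 : w.1 n = true
      · rw [h3, h4]
      · rw [if_pos h3, if_neg h4] at h2
        exact absurd h2 hθne
      · rw [if_neg h3, if_pos h4] at h2
        exact absurd h2.symm hθne
      · rw [Bool.not_eq_true] at h3 h4
        rw [h3, h4]
    obtain ⟨F, hF⟩ := hinj
    have h1 : #Bad ≤ #(ℤ × R) := Cardinal.mk_le_of_injective hF
    have h2 : #(ℤ × R) < continuum.{0} := by
      rw [Cardinal.mk_prod, Cardinal.lift_id, Cardinal.lift_id, Cardinal.mk_int]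
      exact Cardinal.mul_lt_of_lt Cardinal.aleph0_le_continuum
        Cardinal.aleph0_lt_continuum hR
    have h3 : #(ℕ → Bool) = continuum.{0} := by
      rw [← Cardinal.power_def, Cardinal.mk_bool, Cardinal.mk_nat,
        Cardinal.two_power_aleph0]
    rw [h3]
    exact lt_of_le_of_lt h1 h2
  obtain ⟨v, hv⟩ := exists_notin_of_mk_lt Bad hlt
  refine ⟨h₀ + u v, ?_, fun k hk hmem => hv ⟨k, hk, hmem⟩⟩
  rw [smul_add, hh₀]
  have hzero : (m:ℤ) • u v = 0 := by
    have h1 : ((m:ℤ) • u v).1 = 0 := hufst _ _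
    have h2 : ((m:ℤ) • u v).2 = 0 := by
      funext n
      rw [husmul]
      have hθ0 : (m:ℤ) • θ = 0 := (hθ m).mpr dvd_rfl
      simp [hθ0]
    calc (m:ℤ) • u v = (((m:ℤ) • u v).1, ((m:ℤ) • u v).2) := rfl
    _ = (0, 0) := by rw [h1, h2]
    _ = 0 := rfl
  rw [hzero, add_zero]

private lemma mk_closure_le {G : Type u} [AddCommGroup G] (s : Set G) :
    #(AddSubgroup.closure s) ≤ max #s Cardinal.aleph0.{u} := by
  classical
  have hmem : ∀ g : G, g ∈ AddSubgroup.closure s ↔ g ∈ Submodule.span ℤ s := by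
    intro g
    rw [← Submodule.span_int_eq_addSubgroupClosure, Submodule.mem_toAddSubgroup]
  have h1 : #(AddSubgroup.closure s) = #(Submodule.span ℤ s) :=
    Cardinal.mk_congr (Equiv.subtypeEquivRight hmem)
  rw [h1]
  have h2 : (Submodule.span ℤ s : Set G) =
      Set.range (Finsupp.linearCombination ℤ ((↑) : s → G)) := by
    rw [← LinearMap.coe_range, Finsupp.range_linearCombination, Subtype.range_coe]
  have h3 : #(Submodule.span ℤ s) ≤ #(s →₀ ℤ) := by
    have := Cardinal.mk_congr (Equiv.setCongr h2)
    rw [show #(Submodule.span ℤ s) = #(Set.range ⇑(Finsupp.linearCombination ℤ ((↑) : s → G))) from this]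
    exact Cardinal.mk_range_le
  refine h3.trans ?_
  rcases isEmpty_or_nonempty s with he | hne
  · have hsub : Subsingleton (s →₀ ℤ) := by
      constructor
      intro a b
      ext x
      exact (he.false x).elim
    exact le_max_of_le_right ((Cardinal.le_one_iff_subsingleton.mpr hsub).trans
      Cardinal.one_le_aleph0)
  · rw [Cardinal.mk_finsupp_lift_of_infinite' (↥s) ℤ]
    simp [Cardinal.lift_id]

private lemma fst_zsmul' {α : Type u} {β : Type v} [AddCommGroup α] [AddCommGroup β]
    (k : ℤ) (p : α × β) : (k • p).1 = k • p.1 :=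
  map_zsmul (AddMonoidHom.fst α β) k p

private lemma snd_zsmul' {α : Type u} {β : Type v} [AddCommGroup α] [AddCommGroup β]
    (k : ℤ) (p : α × β) : (k • p).2 = k • p.2 :=
  map_zsmul (AddMonoidHom.snd α β) k p

private lemma extend_step {G : Type u} [AddCommGroup G]
    (Γ : AddSubgroup (G × HH))
    (hFun : ∀ h : HH, ((0 : G), h) ∈ Γ → h = 0)
    (hcard : #Γ < Cardinal.continuum.{u})
    (x : G) (hx : x ∉ Γ.map (AddMonoidHom.fst G HH)) :
    ∃ h : HH,
      (∀ w : HH, ((0:G), w) ∈ Γ ⊔ AddSubgroup.zmultiples ((x, h) : G × HH) → w = 0) ∧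
      (∀ g : G, (g, (0:HH)) ∈ Γ ⊔ AddSubgroup.zmultiples ((x, h) : G × HH) →
        (g, (0:HH)) ∈ Γ) := by
  classical
  set A : AddSubgroup G := Γ.map (AddMonoidHom.fst G HH) with hA
  set R : AddSubgroup HH := Γ.map (AddMonoidHom.snd G HH) with hR
  -- cardinality of R
  have hR0 : #R < Cardinal.continuum.{0} := by
    have hex : ∀ b : R, ∃ q : G × HH, q ∈ Γ ∧ q.2 = (b : HH) := by
      rintro ⟨b, hb⟩
      obtain ⟨q, hq, hq2⟩ := hb
      exact ⟨q, hq, hq2⟩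
    choose q hq1 hq2 using hex
    have hinj : Function.Injective (fun b : R => (⟨q b, hq1 b⟩ : Γ)) := by
      intro b b' hbb
      have : q b = q b' := congrArg Subtype.val hbb
      apply Subtype.ext
      rw [← hq2 b, ← hq2 b', this]
    have h1 : Cardinal.lift.{u} #R ≤ Cardinal.lift.{0} #Γ :=
      Cardinal.lift_mk_le'.mpr ⟨⟨_, hinj⟩⟩
    rw [Cardinal.lift_uzero] at h1
    have h2 : Cardinal.lift.{u} #R < Cardinal.lift.{u} Cardinal.continuum.{0} := by
      rw [Cardinal.lift_continuum]
      exact lt_of_le_of_lt h1 hcard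
    exact Cardinal.lift_lt.mp h2
  -- the order of x modulo A
  obtain ⟨a, ha⟩ := Int.subgroup_cyclic (A.comap (zmultiplesHom G x))
  set m : ℕ := a.natAbs with hmdef
  have hdvd : ∀ k : ℤ, k • x ∈ A ↔ (m:ℤ) ∣ k := by
    intro k
    have h1 : k • x ∈ A ↔ k ∈ A.comap (zmultiplesHom G x) := by
      rw [AddSubgroup.mem_comap, zmultiplesHom_apply]
    rw [h1, ha, ← AddSubgroup.zmultiples_eq_closure, Int.mem_zmultiples_iff,
      hmdef, Int.natAbs_dvd]
  have hm1 : m ≠ 1 := by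
    intro h1
    apply hx
    have : (1:ℤ) • x ∈ A := (hdvd 1).mpr (by rw [h1]; exact one_dvd 1)
    simpa using this
  -- obtain h with the two key properties
  have hmain : ∃ h : HH, (∀ k : ℤ, k • h ∈ R → (m:ℤ) ∣ k) ∧
      (∀ k : ℤ, (m:ℤ) ∣ k → k • ((x, h) : G × HH) ∈ Γ) := by
    by_cases hm0 : m = 0
    · obtain ⟨h, hk⟩ := key0 R hR0
      refine ⟨h, fun k hkR => ?_, fun k hdk => ?_⟩
      · rw [hm0, Int.natCast_zero, zero_dvd_iff]
        by_contra hkne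
        exact hk k hkne hkR
      · rw [hm0, Int.natCast_zero, zero_dvd_iff] at hdk
        subst hdk
        rw [zero_smul]
        exact zero_mem Γ
    · have hm2 : 2 ≤ m := by omega
      have hmx : (m:ℤ) • x ∈ A := (hdvd m).mpr dvd_rfl
      obtain ⟨qb, hqb, hqb1⟩ := hmx
      have hmxb : (((m:ℤ) • x, qb.2) : G × HH) ∈ Γ := by
        have : qb = ((m:ℤ) • x, qb.2) := by
          apply Prod.ext
          · exact hqb1
          · rfl
        rwa [← this]
      obtain ⟨h, hmh, hk⟩ := key2 R hR0 hm2 qb.2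
      refine ⟨h, fun k hkR => ?_, fun k hdk => ?_⟩
      · by_contra hnd
        exact hk k hnd hkR
      · obtain ⟨t, rfl⟩ := hdk
        have heq : ((m:ℤ) * t) • ((x, h) : G × HH) = t • (((m:ℤ) • x, qb.2) : G × HH) := by
          rw [mul_comm, mul_smul]
          congr 1
          apply Prod.ext
          · rw [fst_zsmul']
          · rw [snd_zsmul', hmh]
        rw [heq]
        exact zsmul_mem hmxb t
  obtain ⟨h, hdvdR, hsm⟩ := hmain
  refine ⟨h, ?_, ?_⟩
  · intro w hw
    rw [AddSubgroup.mem_sup] at hw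
    obtain ⟨γ, hγ, z, hz, hsum⟩ := hw
    rw [AddSubgroup.mem_zmultiples_iff] at hz
    obtain ⟨k, rfl⟩ := hz
    have hfst : γ.1 + k • x = 0 := by
      have := congrArg Prod.fst hsum
      simpa [fst_zsmul'] using this
    have hkA : k • x ∈ A := by
      have hγA : γ.1 ∈ A := ⟨γ, hγ, rfl⟩
      have : k • x = -γ.1 := eq_neg_of_add_eq_zero_right hfst
      rw [this]
      exact neg_mem hγA
    have hkΓ : k • ((x, h) : G × HH) ∈ Γ := hsm k ((hdvd k).mp hkA)
    have : ((0:G), w) ∈ Γ := by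
      rw [← hsum]
      exact add_mem hγ hkΓ
    exact hFun w this
  · intro g hg
    rw [AddSubgroup.mem_sup] at hg
    obtain ⟨γ, hγ, z, hz, hsum⟩ := hg
    rw [AddSubgroup.mem_zmultiples_iff] at hz
    obtain ⟨k, rfl⟩ := hz
    have hsnd : γ.2 + k • h = 0 := by
      have := congrArg Prod.snd hsum
      simpa [snd_zsmul'] using this
    have hkR : k • h ∈ R := by
      have hγR : γ.2 ∈ R := ⟨γ, hγ, rfl⟩
      have heq : k • h = -γ.2 := eq_neg_of_add_eq_zero_right hsnd
      rw [heq]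
      exact neg_mem hγR
    have hkΓ : k • ((x, h) : G × HH) ∈ Γ := hsm k (hdvdR k hkR)
    rw [← hsum]
    exact add_mem hγ hkΓ

private lemma exists_emb {G : Type u} [AddCommGroup G]
    (hcard : #G ≤ Cardinal.continuum.{u}) :
    ∃ f : G →+ HH, Function.Injective f := by
  classical
  obtain ⟨r, wo, hr⟩ := Cardinal.ord_eq G
  haveI : IsWellOrder G r := wo
  set Good : Set (Set G × AddSubgroup (G × HH)) := {p |
    (∀ ⦃a b : G⦄, r a b → b ∈ p.1 → a ∈ p.1) ∧
    (∀ h : HH, ((0 : G), h) ∈ p.2 → h = 0) ∧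
    (∀ g : G, (g, (0:HH)) ∈ p.2 → g = 0) ∧
    (∀ g ∈ p.1, ∃ h : HH, (g, h) ∈ p.2) ∧
    (∀ q : G × HH, q ∈ p.2 → q.1 ∈ AddSubgroup.closure p.1)} with hGoodDef
  have hub : ∀ c ⊆ Good, IsChain (· ≤ ·) c → ∃ ub ∈ Good, ∀ z ∈ c, z ≤ ub := by
    intro c hc hchain
    rcases Set.eq_empty_or_nonempty c with rfl | ⟨p₀, hp₀⟩
    · refine ⟨(∅, ⊥), ⟨?_, ?_, ?_, ?_, ?_⟩, by simp⟩
      · intro a b _ hb; exact absurd hb (Set.notMem_empty b)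
      · intro h hh
        rw [AddSubgroup.mem_bot] at hh
        exact (congrArg Prod.snd hh)
      · intro g hg
        rw [AddSubgroup.mem_bot] at hg
        exact (congrArg Prod.fst hg)
      · intro g hg; exact absurd hg (Set.notMem_empty g)
      · intro q hq
        rw [AddSubgroup.mem_bot] at hq
        rw [hq]
        exact zero_mem _
    · haveI : Nonempty c := ⟨⟨p₀, hp₀⟩⟩
      have hdir : Directed (· ≤ ·)
          (fun p : c => (p : Set G × AddSubgroup (G × HH)).2) := by
        intro p q
        rcases hchain.total p.2 q.2 with hpq | hqp
        · exact ⟨q, hpq.2, le_rfl⟩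
        · exact ⟨p, le_rfl, hqp.2⟩
      have hmem : ∀ q : G × HH,
          (q ∈ ⨆ p : c, (p : Set G × AddSubgroup (G × HH)).2 ↔
            ∃ p : c, q ∈ (p : Set G × AddSubgroup (G × HH)).2) :=
        fun q => AddSubgroup.mem_iSup_of_directed hdir
      refine ⟨(⋃ p : c, (p : Set G × AddSubgroup (G × HH)).1,
        ⨆ p : c, (p : Set G × AddSubgroup (G × HH)).2), ⟨?_, ?_, ?_, ?_, ?_⟩, ?_⟩
      · intro a b hab hb
        rw [Set.mem_iUnion] at hb ⊢
        obtain ⟨p, hbp⟩ := hb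
        exact ⟨p, (hc p.2).1 hab hbp⟩
      · intro h hh
        rw [hmem] at hh
        obtain ⟨p, hp⟩ := hh
        exact (hc p.2).2.1 h hp
      · intro g hg
        rw [hmem] at hg
        obtain ⟨p, hp⟩ := hg
        exact (hc p.2).2.2.1 g hp
      · intro g hg
        rw [Set.mem_iUnion] at hg
        obtain ⟨p, hgp⟩ := hg
        obtain ⟨h, hh⟩ := (hc p.2).2.2.2.1 g hgp
        refine ⟨h, ?_⟩
        exact (le_iSup (fun p : c => (p : Set G × AddSubgroup (G × HH)).2) p) hh
      · intro q hq
        rw [hmem] at hq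
        obtain ⟨p, hp⟩ := hq
        have h1 := (hc p.2).2.2.2.2 q hp
        refine AddSubgroup.closure_mono ?_ h1
        intro y hy
        exact Set.mem_iUnion.mpr ⟨p, hy⟩
      · intro z hz
        refine ⟨?_, ?_⟩
        · intro y hy
          exact Set.mem_iUnion.mpr ⟨⟨z, hz⟩, hy⟩
        · exact le_iSup (fun p : c => (p : Set G × AddSubgroup (G × HH)).2) ⟨z, hz⟩
  obtain ⟨p, hpGoodMax⟩ := zorn_le₀ Good hub
  obtain ⟨hpGood, hpmax⟩ := hpGoodMax
  obtain ⟨hDC, hFun, hInj, hsub, hdom⟩ := hpGood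
  have hwf : WellFounded r := wo.toIsWellFounded.wf
  have hsuniv : p.1 = Set.univ := by
    by_contra hne
    have hcne : p.1ᶜ.Nonempty := Set.nonempty_compl.mpr hne
    set x := hwf.min p.1ᶜ hcne with hxdef
    have hx : x ∉ p.1 := hwf.min_mem _ hcne
    have hxle : ∀ y, r y x → y ∈ p.1 := by
      intro y hy
      by_contra hyn
      exact hwf.not_lt_min _ hyn hy
    have hseq : p.1 = {y | r y x} := by
      ext y
      constructor
      · intro hy
        rcases trichotomous_of r y x with h1 | h1 | h1
        · exact h1
        · exact absurd (h1 ▸ hy) hx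
        · exact absurd (hDC h1 hy) hx
      · exact fun hy => hxle y hy
    have hslt : #p.1 < Cardinal.continuum.{u} := by
      calc #p.1 = #{y // r y x} := by rw [hseq]; rfl
        _ = (Ordinal.typein r x).card := (Ordinal.card_typein x).symm
        _ < #G := Cardinal.card_typein_lt x hr
        _ ≤ Cardinal.continuum.{u} := hcard
    have hclos : #(AddSubgroup.closure p.1) < Cardinal.continuum.{u} :=
      lt_of_le_of_lt (mk_closure_le p.1) (max_lt hslt Cardinal.aleph0_lt_continuum)
    have hΓcard : #p.2 < Cardinal.continuum.{u} := by
      refine lt_of_le_of_lt ?_ hclos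
      refine Cardinal.mk_le_of_injective (f := fun γ : p.2 =>
        (⟨(γ : G × HH).1, hdom _ γ.2⟩ : AddSubgroup.closure p.1)) ?_
      rintro ⟨γ, hγ⟩ ⟨δ, hδ⟩ hgd
      have h1 : γ.1 = δ.1 := congrArg Subtype.val hgd
      have h2 : γ - δ ∈ p.2 := sub_mem hγ hδ
      have h3 : γ - δ = (((0:G), γ.2 - δ.2) : G × HH) := by
        apply Prod.ext
        · show γ.1 - δ.1 = 0
          rw [h1, sub_self]
        · rfl
      rw [h3] at h2
      have h4 : γ.2 - δ.2 = 0 := hFun _ h2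
      apply Subtype.ext
      apply Prod.ext
      · exact h1
      · exact sub_eq_zero.mp h4
    by_cases hxA : x ∈ p.2.map (AddMonoidHom.fst G HH)
    · obtain ⟨q, hq, hq1⟩ := hxA
      have hq' : ((x, q.2) : G × HH) ∈ p.2 := by
        have heq : q = (x, q.2) := by
          apply Prod.ext
          · exact hq1
          · rfl
        rwa [heq] at hq
      have hGood' : (insert x p.1, p.2) ∈ Good := by
        refine ⟨?_, hFun, hInj, ?_, ?_⟩
        · intro a b hab hb
          rcases hb with rfl | hb
          · exact Set.mem_insert_of_mem _ (hxle a hab)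
          · exact Set.mem_insert_of_mem _ (hDC hab hb)
        · intro g hg
          rcases hg with rfl | hg
          · exact ⟨q.2, hq'⟩
          · exact hsub g hg
        · intro q' hq'2
          exact AddSubgroup.closure_mono (Set.subset_insert x p.1) (hdom q' hq'2)
      have hle : p ≤ (insert x p.1, p.2) := ⟨Set.subset_insert x p.1, le_rfl⟩
      have := (hpmax hGood' hle).1 (Set.mem_insert x p.1)
      exact hx this
    · obtain ⟨h, hFun', hInj'⟩ := extend_step p.2 hFun hΓcard x hxA
      set Γ' := p.2 ⊔ AddSubgroup.zmultiples ((x, h) : G × HH) with hΓ'def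
      have hGood' : (insert x p.1, Γ') ∈ Good := by
        refine ⟨?_, hFun', ?_, ?_, ?_⟩
        · intro a b hab hb
          rcases hb with rfl | hb
          · exact Set.mem_insert_of_mem _ (hxle a hab)
          · exact Set.mem_insert_of_mem _ (hDC hab hb)
        · intro g hg
          exact hInj g (hInj' g hg)
        · intro g hg
          rcases hg with rfl | hg
          · refine ⟨h, ?_⟩
            have h1 : ((x, h) : G × HH) ∈ AddSubgroup.zmultiples ((x, h) : G × HH) :=
              AddSubgroup.mem_zmultiples _
            exact AddSubgroup.mem_sup_right h1
          · obtain ⟨w, hw⟩ := hsub g hg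
            exact ⟨w, AddSubgroup.mem_sup_left hw⟩
        · intro q' hq'
          rw [hΓ'def, AddSubgroup.mem_sup] at hq'
          obtain ⟨γ, hγ, z, hz, hsum⟩ := hq'
          rw [AddSubgroup.mem_zmultiples_iff] at hz
          obtain ⟨k, rfl⟩ := hz
          have hfst : q'.1 = γ.1 + k • x := by
            have := congrArg Prod.fst hsum
            simp only [Prod.fst_add, fst_zsmul'] at this
            exact this.symm
          rw [hfst]
          have hγ1 : γ.1 ∈ AddSubgroup.closure (insert x p.1) :=
            AddSubgroup.closure_mono (Set.subset_insert x p.1) (hdom γ hγ)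
          have hx1 : x ∈ AddSubgroup.closure (insert x p.1) :=
            AddSubgroup.subset_closure (Set.mem_insert x p.1)
          exact add_mem hγ1 (zsmul_mem hx1 k)
      have hle : p ≤ (insert x p.1, Γ') := ⟨Set.subset_insert x p.1, le_sup_left⟩
      have := (hpmax hGood' hle).1 (Set.mem_insert x p.1)
      exact hx this
  have hexists : ∀ g : G, ∃ hh : HH, (g, hh) ∈ p.2 :=
    fun g => hsub g (hsuniv ▸ Set.mem_univ g)
  choose F hF using hexists
  have huniq : ∀ (g : G) (h1 h2 : HH), (g, h1) ∈ p.2 → (g, h2) ∈ p.2 → h1 = h2 := by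
    intro g h1 h2 ha hb
    have hmem : (((0:G), h1 - h2) : G × HH) ∈ p.2 := by
      have hs := sub_mem ha hb
      have heq : ((g, h1) : G × HH) - (g, h2) = ((0:G), h1 - h2) := by
        apply Prod.ext
        · show g - g = 0
          rw [sub_self]
        · rfl
      rwa [heq] at hs
    exact sub_eq_zero.mp (hFun _ hmem)
  refine ⟨{ toFun := F, map_zero' := ?_, map_add' := ?_ }, ?_⟩
  · exact huniq 0 (F 0) 0 (hF 0) (zero_mem p.2)
  · intro a b
    have hab : ((a + b : G), F a + F b) ∈ p.2 := by
      have hs := add_mem (hF a) (hF b)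
      have heq : ((a, F a) : G × HH) + (b, F b) = (a + b, F a + F b) := rfl
      rwa [heq] at hs
    exact huniq _ _ _ (hF (a + b)) hab
  · intro a b hab
    simp only [AddMonoidHom.coe_mk, ZeroHom.coe_mk] at hab
    have hmem : ((a - b : G), (0:HH)) ∈ p.2 := by
      have h1 := sub_mem (hF a) (hF b)
      have heq : ((a, F a) : G × HH) - (b, F b) = (a - b, F a - F b) := rfl
      rw [heq] at h1
      rwa [hab, sub_self] at h1
    exact sub_eq_zero.mp (hInj _ hmem)


end SepMetrAux

/-- Every abelian group of cardinality at most `𝔠` admits a separable metrizable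
Hausdorff group topology. -/
theorem exists_separable_metrizable_group_topology {G : Type u} [AddCommGroup G]
    (hcard : Cardinal.mk G ≤ Cardinal.continuum.{u}) :
    ∃ τ : TopologicalSpace G, @IsTopologicalAddGroup G τ _ ∧ @T2Space G τ ∧
      @TopologicalSpace.MetrizableSpace G τ ∧
      @TopologicalSpace.SeparableSpace G τ := by
  obtain ⟨f, hf⟩ := exists_emb hcard
  letI τ : TopologicalSpace G := TopologicalSpace.induced f inferInstance
  have hemb : @Topology.IsEmbedding G HH τ _ f := ⟨⟨rfl⟩, hf⟩
  haveI h2 : @SecondCountableTopology G τ := hemb.secondCountableTopology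
  exact ⟨τ, topologicalAddGroup_induced f, hemb.t2Space, hemb.metrizableSpace,
    @TopologicalSpace.SecondCountableTopology.to_separableSpace G τ h2⟩
end

section
/- Let G be a divisible abelian topological group with no torsion whose underlying space is analytic (metrizable and a continuous image of a Polish space), and let H be a subgroup of G (with the subspace topology) which is a Polish group. Then for every positive integer n the map (1/n) : nH → H, assigning to each x ∈ nH = {n·y : y ∈ H} the unique y ∈ H with n·y = x, is continuous. -/
open Set Topology MeasureTheory Filter TopologicalSpace Pointwise

section MeagerLemmas

variable {α : Type*} [TopologicalSpace α]

/-- A countable union of meager sets is meager. -/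
lemma isMeagre_iUnion_countable {ι : Sort*} [Countable ι] {s : ι → Set α}
    (h : ∀ i, IsMeagre (s i)) : IsMeagre (⋃ i, s i) := by
  rw [IsMeagre, compl_iUnion]
  exact countable_iInter_mem.mpr h

variable [SecondCountableTopology α]

/-- The largest open set in which `S` is locally meager. -/
def meagerKernel (S : Set α) : Set α :=
  ⋃ V ∈ {V | V ∈ countableBasis α ∧ IsMeagre (S ∩ V)}, V

lemma isOpen_meagerKernel (S : Set α) : IsOpen (meagerKernel S) :=
  isOpen_biUnion fun V hV => (isBasis_countableBasis α).isOpen hV.1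

lemma isMeagre_inter_meagerKernel (S : Set α) : IsMeagre (S ∩ meagerKernel S) := by
  have hc : {V | V ∈ countableBasis α ∧ IsMeagre (S ∩ V)}.Countable :=
    (countable_countableBasis α).mono fun V hV => hV.1
  haveI := hc.to_subtype
  have he : S ∩ meagerKernel S
      = ⋃ V : ↥{V | V ∈ countableBasis α ∧ IsMeagre (S ∩ V)}, (S ∩ ↑V) := by
    rw [meagerKernel, biUnion_eq_iUnion, inter_iUnion]
  rw [he]
  exact isMeagre_iUnion_countable fun V => V.2.2

lemma mem_meagerKernel_of_nhds {S : Set α} {x : α} {V : Set α} (hV : IsOpen V) (hx : x ∈ V)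
    (hm : IsMeagre (S ∩ V)) : x ∈ meagerKernel S := by
  obtain ⟨W, hW, hxW, hWV⟩ := (isBasis_countableBasis α).exists_subset_of_mem_open hx hV
  exact mem_biUnion ⟨hW, hm.mono (inter_subset_inter_right _ hWV)⟩ hxW

/-- A Baire-measurable hull of an arbitrary set. -/
def baireHull (S : Set α) : Set α := S ∪ (meagerKernel S)ᶜ

lemma subset_baireHull (S : Set α) : S ⊆ baireHull S := subset_union_left

lemma baireHull_subset_closure (S : Set α) : baireHull S ⊆ closure S := by
  rintro x (hx | hx)
  · exact subset_closure hx
  · by_contra hc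
    have h0 : S ∩ (closure S)ᶜ = ∅ := by
      apply eq_empty_of_subset_empty
      rintro y ⟨hy1, hy2⟩
      exact hy2 (subset_closure hy1)
    exact hx (mem_meagerKernel_of_nhds isClosed_closure.isOpen_compl hc
      (h0 ▸ IsMeagre.empty))

lemma baireMeasurableSet_baireHull (S : Set α) : BaireMeasurableSet (baireHull S) := by
  have he : baireHull S = (meagerKernel S)ᶜ ∪ (S ∩ meagerKernel S) := by
    ext x; by_cases hx : x ∈ meagerKernel S <;> simp [baireHull, hx]
  rw [he]
  exact ((isOpen_meagerKernel S).baireMeasurableSet.compl).union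
    (isMeagre_inter_meagerKernel S).baireMeasurableSet

lemma isMeagre_of_subset_baireHull_diff {S Z : Set α} (hZ : BaireMeasurableSet Z)
    (hZS : Z ⊆ baireHull S \ S) : IsMeagre Z := by
  obtain ⟨W, hWopen, hZW⟩ := hZ.residualEq_isOpen
  have hR : {x | (x ∈ Z) = (x ∈ W)} ∈ residual α := hZW
  have hRc : IsMeagre {x | (x ∈ Z) = (x ∈ W)}ᶜ := by
    rw [IsMeagre, compl_compl]; exact hR
  have hWK : W ⊆ meagerKernel S := by
    intro x hx
    obtain ⟨V, hVB, hxV, hVW⟩ :=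
      (isBasis_countableBasis α).exists_subset_of_mem_open hx hWopen
    refine mem_biUnion ⟨hVB, ?_⟩ hxV
    refine hRc.mono ?_
    rintro y ⟨hyS, hyV⟩ hyR
    have hyW : y ∈ W := hVW hyV
    have hyZ : y ∈ Z := cast (hyR.symm) hyW
    exact (hZS hyZ).2 hyS
  refine hRc.mono ?_
  intro y hyZ hyR
  have hyW : y ∈ W := cast hyR hyZ
  have hyK : y ∈ meagerKernel S := hWK hyW
  rcases (hZS hyZ).1 with hyS' | hyK'
  · exact (hZS hyZ).2 hyS'
  · exact hyK' hyK

end MeagerLemmas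

section AnalyticBP

variable {β : Type*} [MetricSpace β] [SecondCountableTopology β]

/-- Analytic sets in a separable metric space have the Baire property. -/
theorem analyticSet_baireMeasurableSet {s : Set β} (hs : AnalyticSet s) :
    BaireMeasurableSet s := by
  rw [AnalyticSet] at hs
  rcases hs with rfl | ⟨F, hF, rfl⟩
  · exact IsMeagre.empty.baireMeasurableSet
  -- Souslin scheme indexed by finite sequences
  let A : List ℕ → Set β :=
    fun l => F '' PiNat.cylinder (fun i => l.getD i 0) l.length
  have hA : ∀ l : List ℕ, A l = F '' PiNat.cylinder (fun i => l.getD i 0) l.length :=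
    fun _ => rfl
  have hext : ∀ (l : List ℕ) (k : ℕ),
      (fun i => (l ++ [k]).getD i 0) = Function.update (fun i => l.getD i 0) l.length k := by
    intro l k
    funext i
    rcases lt_trichotomy i l.length with hi | rfl | hi
    · rw [List.getD_append _ _ _ _ hi, Function.update_of_ne (by omega)]
    · rw [List.getD_append_right _ _ _ _ le_rfl, Nat.sub_self]
      simp
    · rw [List.getD_append_right _ _ _ _ (by omega), Function.update_of_ne (by omega),
        List.getD_eq_default _ _ (by simp only [List.length_singleton]; omega),
        List.getD_eq_default _ _ (by omega)]
  have hAsplit : ∀ l : List ℕ, A l = ⋃ k, A (l ++ [k]) := by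
    intro l
    have h1 : ∀ k : ℕ, PiNat.cylinder (fun i => (l ++ [k]).getD i 0) (l ++ [k]).length
        = PiNat.cylinder (Function.update (fun i => l.getD i 0) l.length k) (l.length + 1) := by
      intro k
      rw [hext l k]
      congr 1
      simp
    calc A l = F '' PiNat.cylinder (fun i => l.getD i 0) l.length := hA l
      _ = F '' ⋃ k, PiNat.cylinder (Function.update (fun i => l.getD i 0) l.length k)
            (l.length + 1) := congrArg (fun S => F '' S)
              (PiNat.iUnion_cylinder_update (fun i => l.getD i 0) l.length).symm
      _ = ⋃ k, A (l ++ [k]) := by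
            rw [image_iUnion]
            exact iUnion_congr fun k => by rw [hA (l ++ [k]), h1 k]
  set M : Set β := ⋃ l : List ℕ, (baireHull (A l) \ ⋃ k, baireHull (A (l ++ [k]))) with hM
  have hMmeagre : IsMeagre M := by
    apply isMeagre_iUnion_countable
    intro l
    apply isMeagre_of_subset_baireHull_diff
      ((baireMeasurableSet_baireHull _).diff
        (BaireMeasurableSet.iUnion fun k => baireMeasurableSet_baireHull _))
    rintro x ⟨hx1, hx2⟩
    refine ⟨hx1, fun hxA => hx2 ?_⟩
    rw [hAsplit l] at hxA
    obtain ⟨k, hk⟩ := mem_iUnion.mp hxA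
    exact mem_iUnion.mpr ⟨k, subset_baireHull _ hk⟩
  have hclaim : baireHull (A []) \ M ⊆ range F := by
    rintro x ⟨hx0, hxM⟩
    have step : ∀ l : List ℕ, x ∈ baireHull (A l) → ∃ k, x ∈ baireHull (A (l ++ [k])) := by
      intro l hl
      by_contra hcon
      push_neg at hcon
      refine hxM (mem_iUnion.mpr ⟨l, hl, fun hmem => ?_⟩)
      obtain ⟨k, hk⟩ := mem_iUnion.mp hmem
      exact hcon k hk
    -- construct the branch
    let L : ℕ → {l : List ℕ // x ∈ baireHull (A l)} := fun m =>
      Nat.rec ⟨[], hx0⟩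
        (fun _ p => ⟨p.1 ++ [Classical.choose (step p.1 p.2)],
          Classical.choose_spec (step p.1 p.2)⟩) m
    have hLsucc : ∀ m, (L (m + 1)).1
        = (L m).1 ++ [Classical.choose (step (L m).1 (L m).2)] := fun m => rfl
    have hLlen : ∀ m, (L m).1.length = m := by
      intro m
      induction m with
      | zero => rfl
      | succ k ih => rw [hLsucc k]; simp [ih]
    set g : ℕ → ℕ := fun i => (L (i + 1)).1.getD i 0 with hg
    have hstable : ∀ m i, i < m → (L m).1.getD i 0 = g i := by
      intro m
      induction m with
      | zero => omega
      | succ k ih =>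
        intro i hi
        rcases lt_or_eq_of_le (Nat.lt_succ_iff.mp hi) with hik | hik
        · rw [hLsucc k, List.getD_append _ _ _ _ (by rw [hLlen]; exact hik)]
          exact ih i hik
        · subst hik; rfl
    have hcyl : ∀ m, PiNat.cylinder (fun i => (L m).1.getD i 0) (L m).1.length
        = PiNat.cylinder g m := by
      intro m
      rw [hLlen m, ← PiNat.mem_cylinder_iff_eq, PiNat.mem_cylinder_iff]
      intro i hi
      exact hstable m i hi
    have hxc : ∀ m : ℕ, x ∈ closure (F '' PiNat.cylinder g m) := by
      intro m
      have h1 := baireHull_subset_closure _ (L m).2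
      rw [hA (L m).1, hcyl m] at h1
      exact h1
    have hdist : ∀ ε > (0:ℝ), dist x (F g) ≤ ε := by
      intro ε hε
      have hnb : F ⁻¹' Metric.ball (F g) ε ∈ 𝓝 g :=
        hF.continuousAt (Metric.ball_mem_nhds _ hε)
      obtain ⟨O, hOsub, hOopen, hgO⟩ := mem_nhds_iff.mp hnb
      obtain ⟨c, hcB, hgc, hcO⟩ :=
        (PiNat.isTopologicalBasis_cylinders
          (fun _ : ℕ => ℕ)).exists_subset_of_mem_open hgO hOopen
      obtain ⟨y, m, rfl⟩ := hcB
      have hceq : PiNat.cylinder g m = PiNat.cylinder y m :=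
        PiNat.mem_cylinder_iff_eq.mp hgc
      have hsub : F '' PiNat.cylinder g m ⊆ Metric.ball (F g) ε := by
        rw [hceq]
        exact image_subset_iff.mpr (hcO.trans hOsub)
      have hx1 : x ∈ closure (Metric.ball (F g) ε) := closure_mono hsub (hxc m)
      have hx2 : x ∈ Metric.closedBall (F g) ε :=
        Metric.closure_ball_subset_closedBall hx1
      exact Metric.mem_closedBall.mp hx2
    have hd : dist x (F g) = 0 := by
      by_contra hne
      have hpos : 0 < dist x (F g) := lt_of_le_of_ne dist_nonneg (Ne.symm hne)
      have := hdist (dist x (F g) / 2) (by positivity)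
      linarith
    exact ⟨g, (dist_eq_zero.mp hd).symm⟩
  have hA0 : A [] = range F := by
    rw [hA []]
    simp [PiNat.cylinder_zero, image_univ]
  rw [hA0] at hclaim
  have hsub2 : baireHull (range F) \ range F ⊆ M := by
    intro y hy
    by_contra hyM
    exact hy.2 (hclaim ⟨hy.1, hyM⟩)
  rw [← Set.diff_diff_cancel_left (subset_baireHull (range F))]
  exact (baireMeasurableSet_baireHull _).diff
    (hMmeagre.mono hsub2).baireMeasurableSet

end AnalyticBP

section Pettis

/-- Pettis' difference lemma: in a Baire topological additive group, a nonmeager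
Baire-measurable set `A` satisfies that `A - A` is a neighborhood of `0`. -/
theorem sub_mem_nhds_of_baireMeasurableSet {K : Type*} [AddCommGroup K] [TopologicalSpace K]
    [IsTopologicalAddGroup K] [BaireSpace K] {A : Set K} (hA : BaireMeasurableSet A)
    (hnm : ¬ IsMeagre A) : A - A ∈ 𝓝 (0 : K) := by
  obtain ⟨W, hWopen, hAW⟩ := hA.residualEq_isOpen
  have hR : {x | (x ∈ A) = (x ∈ W)} ∈ residual K := hAW
  obtain ⟨u, hu⟩ : W.Nonempty := by
    rcases eq_empty_or_nonempty W with rfl | h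
    · exfalso
      apply hnm
      refine mem_of_superset hR ?_
      intro x hx hxa
      exact (cast hx hxa : x ∈ (∅ : Set K))
    · exact h
  have hsub : (fun w => w - u) '' W ⊆ A - A := by
    rintro _ ⟨w, hw, rfl⟩
    have hR2 : (fun y => y - (w - u)) ⁻¹' {x | (x ∈ A) = (x ∈ W)} ∈ residual K :=
      (tendsto_residual_of_isOpenMap
        (continuous_id.sub continuous_const) (isOpenMap_sub_right _)) hR
    have hdense := dense_of_mem_residual (inter_mem hR hR2)
    have hOopen : IsOpen (W ∩ (fun y => y - (w - u)) ⁻¹' W) :=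
      hWopen.inter (hWopen.preimage (continuous_id.sub continuous_const))
    have hOne : (W ∩ (fun y => y - (w - u)) ⁻¹' W).Nonempty :=
      ⟨w, hw, by simpa [sub_sub_cancel] using hu⟩
    obtain ⟨y, ⟨hyR, hyR2⟩, hyW, hyW2⟩ := hdense.exists_mem_open hOopen hOne
    have hyA : y ∈ A := cast hyR.symm hyW
    have hyA2 : y - (w - u) ∈ A := cast hyR2.symm hyW2
    have hmem := Set.sub_mem_sub hyA hyA2
    rwa [sub_sub_cancel] at hmem
  have hopen : IsOpen ((fun w => w - u) '' W) := (isOpenMap_sub_right u) W hWopen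
  exact mem_of_superset (hopen.mem_nhds ⟨u, hu, sub_self u⟩) hsub

end Pettis

/-- A topological space is analytic if it is metrizable and a continuous image of a
Polish space. -/
def IsAnalyticSpace (X : Type*) [TopologicalSpace X] : Prop :=
  TopologicalSpace.MetrizableSpace X ∧
    ∃ (P : Type) (tP : TopologicalSpace P), @PolishSpace P tP ∧
      ∃ f : P → X, @Continuous P X tP _ f ∧ Function.Surjective f

/-- If a Polish group `H` is a subgroup of a divisible analytic abelian topological group
`G` with no torsion, then for every positive integer `n` the map `1/n : nH → H`
(assigning to `x ∈ nH` the unique `y ∈ H` with `n • y = x`) is continuous. -/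
theorem continuous_div_nat_of_polish_subgroup_of_analytic {G : Type*} [AddCommGroup G]
    [TopologicalSpace G] [IsTopologicalAddGroup G]
    (hanal : IsAnalyticSpace G)
    (hdiv : ∀ (a : G) (n : ℕ), 0 < n → ∃ x : G, n • x = a)
    (htf : ∀ (x : G) (n : ℕ), 0 < n → n • x = 0 → x = 0)
    (H : AddSubgroup G) (hpolish : PolishSpace H)
    (n : ℕ) (hn : 0 < n)
    (f : {x : G // ∃ y ∈ H, n • y = x} → H)
    (hf : ∀ x, n • ((f x : G)) = (x : G)) :
    Continuous f := by
  classical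
  obtain ⟨hmetr, Q, tQ, hQpol, σ, hσcont, hσsurj⟩ := hanal
  haveI := hmetr
  letI := tQ
  haveI : PolishSpace Q := hQpol
  letI := upgradeIsCompletelyMetrizable (↥H)
  haveI : BaireSpace ↥H := BaireSpace.of_completelyPseudoMetrizable
  -- uniqueness of division by n
  have uniq : ∀ z z' : G, n • z = n • z' → z = z' := fun z z' h =>
    sub_eq_zero.mp (htf (z - z') n hn (by rw [smul_sub, h, sub_self]))
  -- division by n as a map H → G
  choose φ hφ using fun h : ↥H => hdiv (h : G) n hn
  let Φ : ↥H →+ G := AddMonoidHom.mk' φ (fun a b => uniq _ _ (by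
    rw [hφ (a + b), smul_add, hφ a, hφ b]
    rfl))
  -- preimages of open sets under φ are analytic
  have key : ∀ U : Set G, IsOpen U → AnalyticSet (φ ⁻¹' U) := by
    intro U hU
    have hclosed : IsClosed {p : ↥H × Q | n • σ p.2 = (p.1 : G)} :=
      isClosed_eq ((hσcont.comp continuous_snd).nsmul n)
        (continuous_subtype_val.comp continuous_fst)
    have himg : φ ⁻¹' U =
        (fun p : {p : ↥H × Q // n • σ p.2 = ((p : ↥H × Q).1 : G)} => (p : ↥H × Q).1) ''
          (Subtype.val ⁻¹' {p : ↥H × Q | σ p.2 ∈ U}) := by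
      ext h
      constructor
      · intro hh
        obtain ⟨q, hq⟩ := hσsurj (φ h)
        exact ⟨⟨(h, q), by rw [hq]; exact hφ h⟩, by simpa [hq] using hh, rfl⟩
      · rintro ⟨⟨⟨h', q⟩, hC⟩, hO, rfl⟩
        have hqe : σ q = φ h' := uniq _ _ (by rw [hC, hφ])
        have hO' : σ q ∈ U := hO
        rwa [hqe] at hO'
    rw [himg]
    haveI : PolishSpace {p : ↥H × Q // n • σ p.2 = ((p : ↥H × Q).1 : G)} :=
      hclosed.polishSpace
    exact IsOpen.analyticSet_image (hU.preimage ((hσcont.comp continuous_snd).comp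
      continuous_subtype_val)) (continuous_fst.comp continuous_subtype_val)
  -- continuity of φ at 0, via Pettis
  have hΦcont : Continuous Φ := by
    apply continuous_of_continuousAt_zero Φ
    rw [ContinuousAt, map_zero]
    refine Filter.tendsto_def.mpr fun W hW => ?_
    -- find a neighborhood V₀ of 0 with V₀ - V₀ ⊆ W
    obtain ⟨V, hV, hVW⟩ : ∃ V ∈ 𝓝 (0 : G), ∀ a ∈ V, ∀ b ∈ V, a - b ∈ W := by
      have h2 : Tendsto (fun p : G × G => p.1 - p.2) (𝓝 ((0 : G), (0 : G))) (𝓝 0) := by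
        simpa using (continuous_sub : Continuous fun p : G × G => p.1 - p.2).tendsto ((0 : G), (0 : G))
      rw [nhds_prod_eq] at h2
      obtain ⟨s, hs, t, ht, hst⟩ := Filter.mem_prod_iff.mp (h2 hW)
      exact ⟨s ∩ t, inter_mem hs ht,
        fun a ha b hb => hst (⟨ha.1, hb.2⟩ : (a, b) ∈ s ×ˢ t)⟩
    set V₀ : Set G := interior V with hV₀def
    have hV₀ : V₀ ∈ 𝓝 (0 : G) := by
      rw [hV₀def]
      exact interior_mem_nhds.mpr hV
    have hV₀W : ∀ a ∈ V₀, ∀ b ∈ V₀, a - b ∈ W :=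
      fun a ha b hb => hVW a (interior_subset ha) b (interior_subset hb)
    -- countable dense subset of G
    haveI : SeparableSpace G := hσsurj.denseRange.separableSpace hσcont
    obtain ⟨D, hDcount, hDdense⟩ := TopologicalSpace.exists_countable_dense G
    set P : G → Set ↥H := fun c => φ ⁻¹' {g : G | g - c ∈ V₀} with hP
    have hPBM : ∀ c : G, BaireMeasurableSet (P c) := fun c =>
      analyticSet_baireMeasurableSet (key _ (isOpen_interior.preimage
        (continuous_id.sub continuous_const)))
    have hcover : ∀ h : ↥H, ∃ c ∈ D, h ∈ P c := by
      intro h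
      have hOopen : IsOpen {c : G | φ h - c ∈ V₀} :=
        isOpen_interior.preimage (continuous_const.sub continuous_id)
      have hOne : {c : G | φ h - c ∈ V₀}.Nonempty :=
        ⟨φ h, by simpa [sub_self] using mem_of_mem_nhds hV₀⟩
      obtain ⟨c, hcD, hcO⟩ := hDdense.exists_mem_open hOopen hOne
      exact ⟨c, hcD, hcO⟩
    have hex : ∃ c, ¬ IsMeagre (P c) := by
      by_contra hcon
      push_neg at hcon
      haveI := hDcount.to_subtype
      have huniv : (univ : Set ↥H) ⊆ ⋃ c : D, P c := by
        intro h _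
        obtain ⟨c, hcD, hc⟩ := hcover h
        exact mem_iUnion.mpr ⟨⟨c, hcD⟩, hc⟩
      have hmea : IsMeagre (univ : Set ↥H) :=
        (isMeagre_iUnion_countable fun c : D => hcon c).mono huniv
      have hres : (∅ : Set ↥H) ∈ residual ↥H := by
        rw [IsMeagre, compl_univ] at hmea
        exact hmea
      have hdense : Dense (∅ : Set ↥H) := dense_of_mem_residual hres
      haveI : Nonempty ↥H := ⟨0⟩
      exact Set.not_nonempty_empty hdense.nonempty
    obtain ⟨c, hc⟩ := hex
    have hAA : P c - P c ∈ 𝓝 (0 : ↥H) :=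
      sub_mem_nhds_of_baireMeasurableSet (hPBM c) hc
    refine mem_of_superset hAA ?_
    rintro y hy
    obtain ⟨a, ha, b, hb, rfl⟩ := Set.mem_sub.mp hy
    show φ (a - b) ∈ W
    have hmap : φ (a - b) = φ a - φ b := map_sub Φ a b
    rw [hmap]
    have := hV₀W (φ a - c) ha (φ b - c) hb
    rwa [sub_sub_sub_cancel_right] at this
  -- glue: f is φ composed with the inclusion
  have hmem : ∀ x : {x : G // ∃ y ∈ H, n • y = x}, (x : G) ∈ H := by
    rintro ⟨x, y, hyH, rfl⟩
    exact nsmul_mem hyH n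
  let ι : {x : G // ∃ y ∈ H, n • y = x} → ↥H := fun x => ⟨(x : G), hmem x⟩
  have hιcont : Continuous ι := continuous_subtype_val.subtype_mk _
  have hkey : ∀ x, φ (ι x) = ((f x : ↥H) : G) := fun x =>
    uniq _ _ (by rw [hφ (ι x), hf x])
  have hfe : f = fun x => (⟨φ (ι x), by rw [hkey x]; exact (f x).2⟩ : ↥H) :=
    funext fun x => Subtype.ext (hkey x).symm
  rw [hfe]
  exact (hΦcont.comp hιcont).subtype_mk _
end

section
/- There exists a Polish abelian topological group H with no torsion and a sequence (x_k) in H such that the sequence (2·x_k) converges to 0 in H but the sequence (x_k) does not converge to 0 in H; equivalently, the map (1/2) : 2H → H, assigning to each x ∈ 2H = {2·y : y ∈ H} the unique y ∈ H with 2·y = x, is discontinuous. -/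
/-- A Polish abelian topological group with no torsion carrying a sequence `(x_k)` such
that `(2 • x_k)` converges to `0` but `(x_k)` does not (so the map `1/2 : 2H → H` is
discontinuous). -/
structure PolishGroupWithBadHalving : Type 1 where
  carrier : Type
  [grp : AddCommGroup carrier]
  [top : TopologicalSpace carrier]
  topGrp : IsTopologicalAddGroup carrier
  polish : PolishSpace carrier
  torsionFree : ∀ (x : carrier) (n : ℕ), 0 < n → n • x = 0 → x = 0
  seq : ℕ → carrier
  double_tendsto_zero : Filter.Tendsto (fun k => 2 • seq k) Filter.atTop (nhds 0)
  not_tendsto_zero : ¬ Filter.Tendsto seq Filter.atTop (nhds 0)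

open Filter

/-- The `k`-th factor: `ℤ` with a custom norm. -/
def Zw (_k : ℕ) : Type := ℤ

instance (k : ℕ) : AddCommGroup (Zw k) := inferInstanceAs (AddCommGroup ℤ)

def Zw.toInt {k : ℕ} (n : Zw k) : ℤ := n

@[simp] lemma Zw.toInt_add {k : ℕ} (a b : Zw k) :
    (a + b).toInt = a.toInt + b.toInt := rfl
@[simp] lemma Zw.toInt_neg {k : ℕ} (a : Zw k) : (-a).toInt = -a.toInt := rfl
@[simp] lemma Zw.toInt_zero {k : ℕ} : (0 : Zw k).toInt = 0 := rfl
@[simp] lemma Zw.toInt_eq_zero {k : ℕ} {a : Zw k} : a.toInt = 0 ↔ a = 0 := Iff.rfl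

noncomputable def wnorm (k : ℕ) (n : Zw k) : ℝ :=
  (2:ℝ)^(-(k:ℤ)) * |(n.toInt : ℝ)| + (if Odd n.toInt then 1 else 0)

noncomputable def wAddGroupNorm (k : ℕ) : AddGroupNorm (Zw k) where
  toFun n := wnorm k n
  map_zero' := by simp [wnorm]
  add_le' a b := by
    show wnorm k (a+b) ≤ wnorm k a + wnorm k b
    have hpow : (0:ℝ) < (2:ℝ)^(-(k:ℤ)) := by positivity
    have habs : |((a.toInt + b.toInt : ℤ) : ℝ)| ≤ |(a.toInt:ℝ)| + |(b.toInt:ℝ)| := by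
      push_cast; exact abs_add_le _ _
    have key : (2:ℝ)^(-(k:ℤ)) * |((a+b).toInt : ℝ)| ≤
        (2:ℝ)^(-(k:ℤ)) * |(a.toInt:ℝ)| + (2:ℝ)^(-(k:ℤ)) * |(b.toInt:ℝ)| := by
      rw [Zw.toInt_add]
      nlinarith
    have hpar : (if Odd (a+b).toInt then (1:ℝ) else 0) ≤
        (if Odd a.toInt then (1:ℝ) else 0) + (if Odd b.toInt then (1:ℝ) else 0) := by
      rw [Zw.toInt_add]
      rcases Int.even_or_odd a.toInt with ha | ha <;>
        rcases Int.even_or_odd b.toInt with hb | hb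
      · rw [if_neg (Int.not_odd_iff_even.2 (ha.add hb))]
        positivity
      · rw [if_pos (Even.add_odd ha hb), if_neg
          (by simpa [Int.not_odd_iff_even] using ha), if_pos hb]
        norm_num
      · rw [if_pos (Odd.add_even ha hb), if_pos ha, if_neg
          (by simpa [Int.not_odd_iff_even] using hb)]
        norm_num
      · rw [if_neg (Int.not_odd_iff_even.2 (ha.add_odd hb)),
          if_pos ha, if_pos hb]
        norm_num
    have := add_le_add key hpar
    unfold wnorm
    linarith
  neg' a := by simp [wnorm]
  eq_zero_of_map_eq_zero' a ha := by
    have hpow : (0:ℝ) < (2:ℝ)^(-(k:ℤ)) := by positivity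
    have h1 : (0:ℝ) ≤ (if Odd a.toInt then (1:ℝ) else 0) := by positivity
    have h2 : (0:ℝ) ≤ (2:ℝ)^(-(k:ℤ)) * |(a.toInt:ℝ)| := by positivity
    have h3 : (2:ℝ)^(-(k:ℤ)) * |(a.toInt:ℝ)| = 0 := by
      simp only [wnorm] at ha; linarith
    have h4 : |(a.toInt:ℝ)| = 0 := by
      rcases mul_eq_zero.1 h3 with h | h
      · exact absurd h (ne_of_gt hpow)
      · exact h
    have : (a.toInt : ℝ) = 0 := abs_eq_zero.1 h4
    exact Zw.toInt_eq_zero.1 (by exact_mod_cast this)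

noncomputable instance (k : ℕ) : NormedAddCommGroup (Zw k) :=
  (wAddGroupNorm k).toNormedAddCommGroup

lemma Zw.norm_def (k : ℕ) (n : Zw k) :
    ‖n‖ = (2:ℝ)^(-(k:ℤ)) * |(n.toInt : ℝ)| + (if Odd n.toInt then 1 else 0) := rfl

lemma Zw.pow_le_norm (k : ℕ) (n : Zw k) (hn : n ≠ 0) : (2:ℝ)^(-(k:ℤ)) ≤ ‖n‖ := by
  rw [Zw.norm_def]
  have h0 : (1:ℤ) ≤ |n.toInt| := Int.one_le_abs (fun h => hn (Zw.toInt_eq_zero.1 h))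
  have h1 : (1:ℝ) ≤ |(n.toInt:ℝ)| := by
    calc (1:ℝ) ≤ (|n.toInt| : ℝ) := by exact_mod_cast h0
    _ = |(n.toInt:ℝ)| := by push_cast; ring_nf
  have h2 : (0:ℝ) ≤ (if Odd n.toInt then (1:ℝ) else 0) := by positivity
  have hpow : (0:ℝ) < (2:ℝ)^(-(k:ℤ)) := by positivity
  nlinarith

instance (k : ℕ) : CompleteSpace (Zw k) := by
  apply Metric.complete_of_cauchySeq_tendsto
  intro u hu
  obtain ⟨N, hN⟩ := Metric.cauchySeq_iff'.1 hu ((2:ℝ)^(-(k:ℤ))) (by positivity)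
  refine ⟨u N, tendsto_atTop_of_eventually_const (i₀ := N) fun n hn => ?_⟩
  by_contra h
  have h1 := Zw.pow_le_norm k (u n - u N) (sub_ne_zero.2 h)
  have h2 := hN n hn
  rw [dist_eq_norm] at h2
  linarith

def Zw.ofInt {k : ℕ} (n : ℤ) : Zw k := n

@[simp] lemma Zw.toInt_ofInt {k : ℕ} (n : ℤ) : (Zw.ofInt n : Zw k).toInt = n := rfl
@[simp] lemma Zw.ofInt_toInt {k : ℕ} (a : Zw k) : Zw.ofInt a.toInt = a := rfl
@[simp] lemma Zw.toInt_nsmul {k : ℕ} (n : ℕ) (a : Zw k) :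
    (n • a).toInt = n • a.toInt := rfl
@[simp] lemma Zw.ofInt_zero {k : ℕ} : (Zw.ofInt 0 : Zw k) = 0 := rfl

lemma Zw.norm_ofInt_one (k : ℕ) : ‖(Zw.ofInt 1 : Zw k)‖ = (2:ℝ)^(-(k:ℤ)) + 1 := by
  rw [Zw.norm_def]
  simp [Zw.toInt_ofInt]

lemma Zw.norm_ofInt_two (k : ℕ) : ‖(Zw.ofInt 2 : Zw k)‖ = 2 * (2:ℝ)^(-(k:ℤ)) := by
  rw [Zw.norm_def]
  have : ¬ Odd (2:ℤ) := by decide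
  simp [Zw.toInt_ofInt, this]
  ring

noncomputable abbrev H : Type := lp Zw 1

noncomputable def seqH (k : ℕ) : H := lp.single 1 k (Zw.ofInt 1)

lemma norm_seqH (k : ℕ) : ‖seqH k‖ = (2:ℝ)^(-(k:ℤ)) + 1 := by
  have := lp.norm_single (p := 1) (by norm_num) k (Zw.ofInt 1 : Zw k)
  rw [seqH, this, Zw.norm_ofInt_one]

lemma two_smul_seqH (k : ℕ) : 2 • seqH k = lp.single 1 k (Zw.ofInt 2) := by
  apply lp.ext
  have hcoe : ⇑(2 • seqH k) = ⇑(seqH k) + ⇑(seqH k) := by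
    rw [two_smul]; exact lp.coeFn_add _ _
  rw [hcoe]
  funext j
  simp only [Pi.add_apply]
  by_cases hj : j = k
  · subst hj
    rw [seqH, lp.single_apply_self, lp.single_apply_self]
    rfl
  · rw [seqH, lp.single_apply_ne _ _ _ hj, lp.single_apply_ne _ _ _ hj]
    simp

lemma norm_two_smul_seqH (k : ℕ) : ‖2 • seqH k‖ = 2 * (2:ℝ)^(-(k:ℤ)) := by
  rw [two_smul_seqH]
  have := lp.norm_single (p := 1) (by norm_num) k (Zw.ofInt 2 : Zw k)
  rw [this, Zw.norm_ofInt_two]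

/-- the countable dense family -/
noncomputable def FH (g : ℕ →₀ ℤ) : H :=
  ∑ i ∈ g.support, lp.single 1 i (Zw.ofInt (g i))

lemma lp_single_zero (i : ℕ) : (lp.single 1 i (0 : Zw i) : H) = 0 := by
  apply lp.ext
  funext j
  by_cases hj : j = i
  · subst hj; rw [lp.single_apply_self]; rfl
  · rw [lp.single_apply_ne _ _ _ hj]; rfl

lemma denseRange_FH : DenseRange FH := by
  rw [Metric.denseRange_iff]
  intro f r hr
  have hs : HasSum (fun i : ℕ => lp.single 1 i (f i : Zw i)) f :=
    lp.hasSum_single (by norm_num) f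
  have := Metric.tendsto_nhds.1 hs r hr
  obtain ⟨s, hsd⟩ := this.exists
  set g : ℕ →₀ ℤ := Finsupp.onFinset s (fun i => if i ∈ s then (f i : Zw i).toInt else 0)
    (fun i hi => by by_contra h; simp [h] at hi) with hg
  refine ⟨g, ?_⟩
  have hFg : FH g = ∑ i ∈ s, lp.single 1 i (f i : Zw i) := by
    rw [FH]
    rw [Finset.sum_subset (Finsupp.support_onFinset_subset)]
    · apply Finset.sum_congr rfl
      intro i hi
      have : g i = (f i : Zw i).toInt := by simp [hg, Finsupp.onFinset_apply, hi]
      rw [this, Zw.ofInt_toInt]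
    · intro i _ hi
      have : g i = 0 := Finsupp.notMem_support_iff.1 hi
      rw [this, Zw.ofInt_zero, lp_single_zero]
  rw [hFg]
  rw [dist_comm]
  exact hsd

instance : TopologicalSpace.SeparableSpace H :=
  ⟨⟨Set.range FH, Set.countable_range FH, denseRange_FH⟩⟩

instance : PolishSpace H := inferInstance

lemma H_torsionFree (x : H) (n : ℕ) (hn : 0 < n) (hx : n • x = 0) : x = 0 := by
  apply lp.ext
  funext i
  have hcoe : ⇑(n • x) = n • ⇑x := by
    clear hx hn
    induction n with
    | zero => simp [lp.coeFn_zero]; rfl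
    | succ m ih => rw [succ_nsmul, succ_nsmul, lp.coeFn_add, ih]
  have h0 : (n • x : H) i = 0 := by rw [hx]; rfl

  rw [hcoe] at h0
  have h1 : (n : ℤ) * (x i : Zw i).toInt = 0 := by
    have : ((n • ⇑x) i).toInt = n • (x i : Zw i).toInt := rfl
    rw [h0] at this
    simpa [nsmul_eq_mul] using this.symm
  have h2 : (x i : Zw i).toInt = 0 := by
    rcases mul_eq_zero.1 h1 with h | h
    · exact absurd h (by exact_mod_cast hn.ne')
    · exact h
  exact Zw.toInt_eq_zero.1 h2

lemma tendsto_two_smul : Filter.Tendsto (fun k => 2 • seqH k) atTop (nhds 0) := by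
  rw [tendsto_zero_iff_norm_tendsto_zero]
  simp only [norm_two_smul_seqH]
  have h : Filter.Tendsto (fun k : ℕ => (2:ℝ) * ((1:ℝ)/2)^k) atTop (nhds (2 * 0)) :=
    (tendsto_pow_atTop_nhds_zero_of_lt_one (by norm_num) (by norm_num)).const_mul 2
  have he : ∀ k : ℕ, (2:ℝ) * ((1:ℝ)/2)^k = 2 * (2:ℝ)^(-(k:ℤ)) := by
    intro k
    rw [zpow_neg, zpow_natCast, one_div, inv_pow]
  simpa [he, mul_zero] using h

lemma not_tendsto_seqH : ¬ Filter.Tendsto seqH atTop (nhds 0) := by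
  intro h
  have h2 : Filter.Tendsto (fun k => ‖seqH k‖) atTop (nhds 0) :=
    tendsto_zero_iff_norm_tendsto_zero.1 h
  have h3 := (h2.eventually (eventually_lt_nhds (by norm_num : (0:ℝ) < 1))).exists
  obtain ⟨k, hk⟩ := h3
  rw [norm_seqH] at hk
  have : (0:ℝ) < (2:ℝ)^(-(k:ℤ)) := by positivity
  linarith

/-- There is a Polish abelian topological group `H` with no torsion and a sequence
`(x_k)` in `H` with `2 • x_k → 0` while `x_k ↛ 0`; i.e. `1/2 : 2H → H` is
discontinuous. -/
theorem exists_polish_torsionFree_group_with_discontinuous_halving :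
    Nonempty PolishGroupWithBadHalving := by
  exact ⟨{
    carrier := H
    topGrp := inferInstance
    polish := inferInstance
    torsionFree := H_torsionFree
    seq := seqH
    double_tendsto_zero := tendsto_two_smul
    not_tendsto_zero := not_tendsto_seqH }⟩
end

section
/- Let X be an infinite set, k a positive integer, and let 𝒜 and ℬ be two finite collections of subsets of X such that each of 𝒜 and ℬ consists of pairwise disjoint sets, and every member of 𝒜 ∪ ℬ has exactly k elements. Then there exists a subset I ⊆ X such that |I ∩ C| = 1 for every C ∈ 𝒜 ∪ ℬ. -/
lemma exists_partition_into_k_sets' {X : Type*} [DecidableEq X] (k : ℕ) (hk : 0 < k) :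
    ∀ (n : ℕ) (S : Finset X), S.card = n → k ∣ n →
      ∃ P : Finset (Finset X), (∀ C ∈ P, C.card = k) ∧
        (∀ C ∈ P, ∀ D ∈ P, C ≠ D → Disjoint C D) ∧ (∀ C ∈ P, C ⊆ S) ∧
        P.biUnion id = S := by
  intro n
  induction n using Nat.strong_induction_on with
  | _ n ih =>
    intro S hcard hdvd
    rcases Nat.eq_zero_or_pos n with h0 | hpos
    · subst h0
      exact ⟨∅, by simp, by simp, by simp, by simp [Finset.card_eq_zero.mp hcard]⟩
    · have hkn : k ≤ n := Nat.le_of_dvd hpos hdvd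
      obtain ⟨T, hTS, hTcard⟩ := Finset.exists_subset_card_eq (hcard ▸ hkn)
      have hcard' : (S \ T).card = n - k := by
        rw [Finset.card_sdiff_of_subset hTS, hcard, hTcard]
      obtain ⟨P, hPcard, hPdisj, hPsub, hPun⟩ :=
        ih (n - k) (Nat.sub_lt hpos hk) (S \ T) hcard' (Nat.dvd_sub hdvd dvd_rfl)
      have hdisjT : ∀ C ∈ P, Disjoint T C := by
        intro C hC
        exact Finset.disjoint_left.mpr fun a haT haC =>
          (Finset.mem_sdiff.mp (hPsub C hC haC)).2 haT
      refine ⟨insert T P, ?_, ?_, ?_, ?_⟩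
      · intro C hC
        rcases Finset.mem_insert.mp hC with h | h
        · rw [h, hTcard]
        · exact hPcard C h
      · intro C hC D hD hne
        rcases Finset.mem_insert.mp hC with h1 | h1 <;>
          rcases Finset.mem_insert.mp hD with h2 | h2
        · exact absurd (h1.trans h2.symm) hne
        · exact h1 ▸ hdisjT D h2
        · exact (h2 ▸ (hdisjT C h1)).symm
        · exact hPdisj C h1 D h2 hne
      · intro C hC
        rcases Finset.mem_insert.mp hC with h | h
        · exact h ▸ hTS
        · exact (hPsub C h).trans (Finset.sdiff_subset)
      · rw [Finset.biUnion_insert, hPun, id]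
        exact Finset.union_sdiff_of_subset hTS

lemma extend_family' {X : Type*} [DecidableEq X] (k : ℕ) (hk : 0 < k) (A : Finset (Finset X))
    (hAcard : ∀ C ∈ A, C.card = k)
    (hAdisj : ∀ C ∈ A, ∀ D ∈ A, C ≠ D → Disjoint C D)
    (V : Finset X) (hsub : A.biUnion id ⊆ V) (hdvd : k ∣ (V \ A.biUnion id).card) :
    ∃ A' : Finset (Finset X), A ⊆ A' ∧ (∀ C ∈ A', C.card = k) ∧
      (∀ C ∈ A', ∀ D ∈ A', C ≠ D → Disjoint C D) ∧ A'.biUnion id = V := by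
  classical
  obtain ⟨P, hPcard, hPdisj, hPsub, hPun⟩ :=
    exists_partition_into_k_sets' k hk _ (V \ A.biUnion id) rfl hdvd
  have hdisjAP : ∀ C ∈ A, ∀ D ∈ P, Disjoint C D := by
    intro C hC D hD
    refine Finset.disjoint_left.mpr fun a haC haD => ?_
    exact (Finset.mem_sdiff.mp (hPsub D hD haD)).2 (Finset.mem_biUnion.mpr ⟨C, hC, haC⟩)
  refine ⟨A ∪ P, Finset.subset_union_left, ?_, ?_, ?_⟩
  · intro C hC
    rcases Finset.mem_union.mp hC with h | h
    · exact hAcard C h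
    · exact hPcard C h
  · intro C hC D hD hne
    rcases Finset.mem_union.mp hC with h1 | h1 <;>
      rcases Finset.mem_union.mp hD with h2 | h2
    · exact hAdisj C h1 D h2 hne
    · exact hdisjAP C h1 D h2
    · exact (hdisjAP D h2 C h1).symm
    · exact hPdisj C h1 D h2 hne
  · have : (A ∪ P).biUnion id = A.biUnion id ∪ P.biUnion id := by
      ext x; simp [Finset.mem_biUnion, or_and_right, exists_or]
    rw [this, hPun]
    exact Finset.union_sdiff_of_subset hsub

/-- Combinatorial lemma: if `𝒜` and `ℬ` are two disjoint `k`-uniform finite collections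
of subsets of an infinite set `X`, then there is a set `I ⊆ X` meeting each member of
`𝒜 ∪ ℬ` in exactly one point. -/
theorem exists_transversal_of_two_disjoint_uniform_families {X : Type*} [Infinite X]
    (k : ℕ) (hk : 0 < k) (A B : Finset (Finset X))
    (hAcard : ∀ C ∈ A, C.card = k) (hBcard : ∀ C ∈ B, C.card = k)
    (hAdisj : ∀ C ∈ A, ∀ D ∈ A, C ≠ D → Disjoint C D)
    (hBdisj : ∀ C ∈ B, ∀ D ∈ B, C ≠ D → Disjoint C D) :
    ∃ I : Set X, ∀ C : Finset X, C ∈ A ∨ C ∈ B → (I ∩ (C : Set X)).ncard = 1 := by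
  classical
  set UA := A.biUnion id with hUAdef
  set UB := B.biUnion id with hUBdef
  set W := UA ∪ UB with hWdef
  -- fresh points
  obtain ⟨P, hPsub, hPcard⟩ :=
    Set.Infinite.exists_subset_card_eq (Set.Finite.infinite_compl W.finite_toSet)
      (k * W.card - W.card)
  have hdisjWP : Disjoint W P := by
    rw [Finset.disjoint_right]
    intro a haP haW
    exact (hPsub haP) haW
  set V := W ∪ P with hVdef
  have hVcard : V.card = k * W.card := by
    rw [hVdef, Finset.card_union_of_disjoint hdisjWP, hPcard]
    have : W.card ≤ k * W.card := Nat.le_mul_of_pos_left _ hk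
    omega
  have hVdvd : k ∣ V.card := hVcard ▸ Dvd.intro _ rfl
  have hUAV : UA ⊆ V := Finset.subset_union_left.trans Finset.subset_union_left
  have hUBV : UB ⊆ V := Finset.subset_union_right.trans Finset.subset_union_left
  have hUAcard : UA.card = k * A.card := by
    rw [hUAdef, Finset.card_biUnion (t := id) hAdisj]
    rw [show ∑ u ∈ A, (id u).card = ∑ _u ∈ A, k from Finset.sum_congr rfl (fun C hC => hAcard C hC),
      Finset.sum_const, smul_eq_mul, mul_comm]
  have hUBcard : UB.card = k * B.card := by
    rw [hUBdef, Finset.card_biUnion (t := id) hBdisj]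
    rw [show ∑ u ∈ B, (id u).card = ∑ _u ∈ B, k from Finset.sum_congr rfl (fun C hC => hBcard C hC),
      Finset.sum_const, smul_eq_mul, mul_comm]
  have hdvdA : k ∣ (V \ UA).card := by
    rw [Finset.card_sdiff_of_subset hUAV]
    exact Nat.dvd_sub hVdvd ⟨A.card, hUAcard⟩
  have hdvdB : k ∣ (V \ UB).card := by
    rw [Finset.card_sdiff_of_subset hUBV]
    exact Nat.dvd_sub hVdvd ⟨B.card, hUBcard⟩
  obtain ⟨A', hAA', hA'card, hA'disj, hA'un⟩ := extend_family' k hk A hAcard hAdisj V hUAV hdvdA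
  obtain ⟨B', hBB', hB'card, hB'disj, hB'un⟩ := extend_family' k hk B hBcard hBdisj V hUBV hdvdB
  have hA'c : k * A'.card = V.card := by
    rw [← hA'un, Finset.card_biUnion (t := id) hA'disj,
      show ∑ u ∈ A', (id u).card = ∑ _u ∈ A', k from
        Finset.sum_congr rfl (fun C hC => hA'card C hC),
      Finset.sum_const, smul_eq_mul, mul_comm]
  have hB'c : k * B'.card = V.card := by
    rw [← hB'un, Finset.card_biUnion (t := id) hB'disj,
      show ∑ u ∈ B', (id u).card = ∑ _u ∈ B', k from
        Finset.sum_congr rfl (fun C hC => hB'card C hC),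
      Finset.sum_const, smul_eq_mul, mul_comm]
  have hcardeq : A'.card = B'.card := Nat.eq_of_mul_eq_mul_left hk (hA'c.trans hB'c.symm)
  -- Hall's theorem
  set t : {C // C ∈ A'} → Finset (Finset X) :=
    fun C => B'.filter (fun D => ((C : Finset X) ∩ D).Nonempty) with htdef
  have hall : ∀ s : Finset {C // C ∈ A'}, s.card ≤ (s.biUnion t).card := by
    intro s
    have key : (s.biUnion fun C => (C : Finset X)) ⊆ (s.biUnion t).biUnion id := by
      intro x hx
      obtain ⟨C, hCs, hxC⟩ := Finset.mem_biUnion.mp hx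
      have hxV : x ∈ V := hA'un ▸ Finset.mem_biUnion.mpr ⟨C.1, C.2, hxC⟩
      obtain ⟨D, hDB', hxD⟩ := Finset.mem_biUnion.mp (hB'un ▸ hxV)
      have hDt : D ∈ t C := Finset.mem_filter.mpr ⟨hDB', ⟨x, Finset.mem_inter.mpr ⟨hxC, hxD⟩⟩⟩
      exact Finset.mem_biUnion.mpr ⟨D, Finset.mem_biUnion.mpr ⟨C, hCs, hDt⟩, hxD⟩
    have h1 : (s.biUnion fun C => (C : Finset X)).card = k * s.card := by
      rw [Finset.card_biUnion (fun C hC D hD hne =>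
        hA'disj C.1 C.2 D.1 D.2 (fun h => hne (Subtype.ext h)))]
      rw [Finset.sum_congr rfl (fun C _ => hA'card C.1 C.2), Finset.sum_const, smul_eq_mul,
        mul_comm]
    have h2 : ((s.biUnion t).biUnion id).card ≤ k * (s.biUnion t).card := by
      calc ((s.biUnion t).biUnion id).card ≤ ∑ D ∈ s.biUnion t, (id D).card :=
            Finset.card_biUnion_le
        _ = k * (s.biUnion t).card := by
            rw [Finset.sum_congr rfl (fun D hD => ?_), Finset.sum_const, smul_eq_mul, mul_comm]
            obtain ⟨C, _, hDt⟩ := Finset.mem_biUnion.mp hD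
            exact hB'card D (Finset.mem_filter.mp hDt).1
    have := (h1 ▸ Finset.card_le_card key).trans h2
    exact Nat.le_of_mul_le_mul_left this hk
  obtain ⟨f, finj, hf⟩ := (Finset.all_card_le_biUnion_card_iff_exists_injective t).mp hall
  have hfB' : ∀ C : {C // C ∈ A'}, f C ∈ B' := fun C => (Finset.mem_filter.mp (hf C)).1
  have hfne : ∀ C : {C // C ∈ A'}, ((C : Finset X) ∩ f C).Nonempty := fun C => (Finset.mem_filter.mp (hf C)).2
  set g : {C // C ∈ A'} → {D // D ∈ B'} := fun C => ⟨f C, hfB' C⟩ with hgdef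
  have gbij : Function.Bijective g := by
    refine (Fintype.bijective_iff_injective_and_card g).mpr ⟨fun a b h => finj ?_, ?_⟩
    · exact congrArg Subtype.val h
    · rw [Fintype.card_coe, Fintype.card_coe, hcardeq]
  set xf : {C // C ∈ A'} → X := fun C => (hfne C).choose with hxfdef
  have hx1 : ∀ C : {C // C ∈ A'}, xf C ∈ (C : Finset X) :=
    fun C => (Finset.mem_inter.mp (hfne C).choose_spec).1
  have hx2 : ∀ C : {C // C ∈ A'}, xf C ∈ f C :=
    fun C => (Finset.mem_inter.mp (hfne C).choose_spec).2
  refine ⟨Set.range xf, ?_⟩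
  intro C0 hC0
  have main : ∀ c : {C // C ∈ A'},
      (∀ C', xf C' ∈ C0 → C' = c) → xf c ∈ C0 → (Set.range xf ∩ (C0 : Set X)).ncard = 1 := by
    intro c huniq hmem
    have : Set.range xf ∩ (C0 : Set X) = {xf c} := by
      ext y
      constructor
      · rintro ⟨⟨C', rfl⟩, hy⟩
        have : C' = c := huniq C' (Finset.mem_coe.mp hy)
        rw [this]
        rfl
      · rintro rfl
        exact ⟨Set.mem_range_self c, Finset.mem_coe.mpr hmem⟩
    rw [this, Set.ncard_singleton]
  rcases hC0 with hC0 | hC0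
  · have hC0A' : C0 ∈ A' := hAA' hC0
    refine main (⟨C0, hC0A'⟩ : {C // C ∈ A'}) ?_ (hx1 ⟨C0, hC0A'⟩)
    intro C' hy
    by_cases hval : C'.1 = C0
    · exact Subtype.ext hval
    · exact absurd hy (Finset.disjoint_left.mp
        (hA'disj C'.1 C'.2 C0 hC0A' hval) (hx1 C'))
  · have hC0B' : C0 ∈ B' := hBB' hC0
    obtain ⟨c, hc⟩ := gbij.2 ⟨C0, hC0B'⟩
    have hfc : f c = C0 := congrArg Subtype.val hc
    refine main c ?_ (hfc ▸ hx2 c)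
    intro C' hy
    by_cases hval : f C' = C0
    · exact finj (hval.trans hfc.symm)
    · exact absurd hy (Finset.disjoint_left.mp
        (hB'disj (f C') (hfB' C') C0 hC0B' hval) (hx2 C'))
end

section
/- Let G be a topological group whose underlying space is analytic (metrizable and a continuous image of a Polish space), let H be a Polish topological group, and let h : G → H be a continuous surjective group homomorphism. Then h is an open map. -/
open Set Filter Topology TopologicalSpace MeasureTheory PiNat
open scoped Pointwise

section Meagre

variable {X Y : Type*} [TopologicalSpace X] [TopologicalSpace Y]

lemma isMeagre_iUnion' {ι : Sort*} [Countable ι] {s : ι → Set X}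
    (hs : ∀ i, IsMeagre (s i)) : IsMeagre (⋃ i, s i) := by
  rw [IsMeagre, compl_iUnion]
  exact countable_iInter_mem.mpr hs

lemma Homeomorph.isMeagre_image (e : X ≃ₜ Y) {s : Set X} (hs : IsMeagre s) :
    IsMeagre (e '' s) := by
  have : (e '' s)ᶜ = e '' sᶜ := by
    rw [← Set.image_compl_eq e.bijective]
  rw [IsMeagre, this, ← e.residual_map_eq]
  exact Filter.image_mem_map hs

end Meagre

section Hull

variable {X : Type*} [TopologicalSpace X] [SecondCountableTopology X]

/-- Baire-category hull: every set `S` is contained in a Baire measurable set `T ⊆ closure S`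
such that every Baire measurable subset of `T \ S` is meagre. -/
lemma exists_baire_hull (S : Set X) :
    ∃ T : Set X, S ⊆ T ∧ T ⊆ closure S ∧ BaireMeasurableSet T ∧
      ∀ B ⊆ T \ S, BaireMeasurableSet B → IsMeagre B := by
  set 𝒰 : Set (Set X) := {U | IsOpen U ∧ IsMeagre (U ∩ S)} with h𝒰
  set W : Set X := ⋃₀ 𝒰 with hW
  have hWopen : IsOpen W := isOpen_sUnion fun U hU => hU.1
  have hWS : IsMeagre (W ∩ S) := by
    obtain ⟨T, Tcount, T𝒰, hTW⟩ := isOpen_sUnion_countable 𝒰 (fun U hU => hU.1)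
    have : W ∩ S ⊆ ⋃ U : T, ((U : Set X) ∩ S) := by
      rw [hW, ← hTW]
      rintro x ⟨hx, hxS⟩
      obtain ⟨U, hU, hxU⟩ := hx
      exact mem_iUnion.2 ⟨⟨U, hU⟩, hxU, hxS⟩
    have : IsMeagre (⋃ U : T, ((U : Set X) ∩ S)) := by
      have : Countable T := Tcount.to_subtype
      exact isMeagre_iUnion' fun U => (T𝒰 U.2).2
    exact this.mono ‹W ∩ S ⊆ _›
  refine ⟨S ∪ Wᶜ, subset_union_left, ?_, ?_, ?_⟩
  · rintro x (hx | hx)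
    · exact subset_closure hx
    · by_contra hc
      obtain ⟨U, hUopen, hxU, hUS⟩ : ∃ U, IsOpen U ∧ x ∈ U ∧ U ∩ S = ∅ := by
        rw [mem_closure_iff] at hc
        push_neg at hc
        obtain ⟨U, hUo, hxU, hUS⟩ := hc
        exact ⟨U, hUo, hxU, hUS⟩
      exact hx ⟨U, ⟨hUopen, by rw [hUS]; exact IsMeagre.empty⟩, hxU⟩
  · have : S ∪ Wᶜ = Wᶜ ∪ (S ∩ W) := by
      ext x
      by_cases hx : x ∈ W <;> simp [hx] <;> tauto
    rw [this, inter_comm]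
    exact (hWopen.baireMeasurableSet.compl).union hWS.baireMeasurableSet
  · intro B hB hBM
    obtain ⟨U, hUopen, hBU⟩ := hBM.residualEq_isOpen
    have hsym : IsMeagre {x | ¬ ((x ∈ B) = (x ∈ U))} := by
      have hc : {x | ¬ ((x ∈ B) = (x ∈ U))}ᶜ = {x | (x ∈ B) = (x ∈ U)} := by
        ext x; simp
      rw [IsMeagre, hc]
      exact hBU
    have hBS : ∀ x ∈ B, x ∉ S := fun x hx => (hB hx).2
    have hUS : IsMeagre (U ∩ S) := by
      refine hsym.mono fun x ⟨hxU, hxS⟩ => ?_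
      simp only [mem_setOf_eq]
      intro hiff
      exact hBS x (hiff ▸ hxU) hxS
    have hUW : U ⊆ W := fun x hx => ⟨U, ⟨hUopen, hUS⟩, hx⟩
    have hBW : B ⊆ Wᶜ := by
      intro x hx
      rcases hB hx with ⟨hxT, hxS⟩
      rcases hxT with h | h
      · exact absurd h hxS
      · exact h
    refine hsym.mono fun x hx => ?_
    simp only [mem_setOf_eq]
    intro hiff
    exact hBW hx (hUW (hiff ▸ hx))

end Hull

section Nikodym

variable {H : Type*} [TopologicalSpace H] [T2Space H] [SecondCountableTopology H]

/-- Nikodym's theorem: analytic sets have the Baire property. -/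
lemma MeasureTheory.AnalyticSet.baireMeasurableSet {A : Set H} (hA : MeasureTheory.AnalyticSet A) :
    BaireMeasurableSet A := by
  rw [MeasureTheory.AnalyticSet] at hA
  rcases hA with rfl | ⟨f, fcont, frange⟩
  · exact isOpen_empty.baireMeasurableSet
  -- the Souslin scheme
  set As : List ℕ → Set H := fun s => f '' {x | res x s.length = s} with hAs
  have hAsucc : ∀ s : List ℕ, As s = ⋃ k, As (k :: s) := by
    intro s
    apply Subset.antisymm
    · rintro y ⟨x, hx, rfl⟩
      refine mem_iUnion.2 ⟨x s.length, x, ?_, rfl⟩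
      simp only [mem_setOf_eq, List.length_cons, res_succ]
      rw [hx]
    · rintro y hy
      obtain ⟨k, x, hx, rfl⟩ := mem_iUnion.1 hy
      simp only [mem_setOf_eq, List.length_cons, res_succ, List.cons.injEq] at hx
      exact ⟨x, hx.2, rfl⟩
  choose T hT₁ hT₂ hT₃ hT₄ using fun s : List ℕ => exists_baire_hull (As s)
  set M : Set H := ⋃ s : List ℕ, (T s \ ⋃ k, T (k :: s)) with hM
  have hMmeagre : IsMeagre M := by
    apply isMeagre_iUnion'
    intro s
    refine hT₄ s _ ?_ ((hT₃ s).diff (BaireMeasurableSet.iUnion fun k => hT₃ (k :: s)))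
    intro x hx
    refine ⟨hx.1, fun hxA => hx.2 ?_⟩
    rw [hAsucc s] at hxA
    obtain ⟨k, hk⟩ := mem_iUnion.1 hxA
    exact mem_iUnion.2 ⟨k, hT₁ _ hk⟩
  have key : T [] \ M ⊆ range f := by
    rintro y ⟨hyT, hyM⟩
    have step : ∀ s : List ℕ, y ∈ T s → ∃ k, y ∈ T (k :: s) := by
      intro s hs
      by_contra hc
      push_neg at hc
      refine hyM (mem_iUnion.2 ⟨s, hs, fun h => ?_⟩)
      obtain ⟨k, hk⟩ := mem_iUnion.1 h
      exact hc k hk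
    -- recursively build lists
    let L : ℕ → {l : List ℕ // y ∈ T l} := fun n =>
      Nat.rec ⟨[], hyT⟩ (fun _ p =>
        ⟨Classical.choose (step p.1 p.2) :: p.1, Classical.choose_spec (step p.1 p.2)⟩) n
    have hLsucc : ∀ n, ∃ k, (L (n + 1)).1 = k :: (L n).1 := fun n => ⟨_, rfl⟩
    set x : ℕ → ℕ := fun n => ((L (n + 1)).1).headI with hx
    have hres : ∀ n, res x n = (L n).1 := by
      intro n
      induction n with
      | zero => rfl
      | succ n ih =>
        obtain ⟨k, hk⟩ := hLsucc n
        rw [res_succ, ih, hx]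
        simp only [hk, List.headI]
    have hcl : ∀ n, y ∈ closure (As ((L n).1)) := fun n => hT₂ _ (L n).2
    have hyfx : ∀ O : Set H, IsOpen O → f x ∈ O → y ∈ closure O := by
      intro O hO hfxO
      have hpre : f ⁻¹' O ∈ 𝓝 x := hO.preimage fcont |>.mem_nhds hfxO
      obtain ⟨t, ⟨z, n, rfl⟩, hxt, hts⟩ :=
        (PiNat.isTopologicalBasis_cylinders (fun _ : ℕ => ℕ)).mem_nhds_iff.1 hpre
      have hcyl : PiNat.cylinder x n = PiNat.cylinder z n := PiNat.mem_cylinder_iff_eq.1 hxt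
      have hsub : As ((L n).1) ⊆ O := by
        rintro w ⟨u, hu, rfl⟩
        apply hts
        rw [← hcyl, PiNat.cylinder_eq_res]
        simp only [mem_setOf_eq]
        rw [← hres n] at hu
        simpa [res_length] using hu
      exact closure_mono hsub (hcl n)
    refine ⟨x, ?_⟩
    by_contra hne
    obtain ⟨O, O', hO, hO', hfxO, hyO', hdisj⟩ := t2_separation hne
    have := hyfx O hO hfxO
    rw [mem_closure_iff] at this
    obtain ⟨w, hw₁, hw₂⟩ := this O' hO' hyO'
    exact hdisj.le_bot ⟨hw₂, hw₁⟩
  have hTA : A ⊆ T [] := by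
    have : As [] = A := by
      rw [hAs]
      simp only [List.length_nil]
      rw [← frange]
      congr 1
      ext z
      simp [res_zero]
    rw [← this]
    exact hT₁ []
  have hdiff : T [] \ A ⊆ M := by
    intro y hy
    by_contra hc
    exact hy.2 (frange ▸ key ⟨hy.1, hc⟩)
  have hAeq : A = T [] \ (T [] \ A) := (Set.diff_diff_cancel_left hTA).symm
  rw [hAeq]
  exact (hT₃ []).diff (hMmeagre.mono hdiff).baireMeasurableSet

end Nikodym

section Pettis

lemma not_isMeagre_univ {X : Type*} [TopologicalSpace X] [BaireSpace X] [Nonempty X] :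
    ¬ IsMeagre (univ : Set X) := by
  intro h
  rw [IsMeagre, compl_univ] at h
  have : Dense (∅ : Set X) := dense_of_mem_residual h
  simpa using this.nonempty

variable {H : Type*} [Group H] [TopologicalSpace H] [IsTopologicalGroup H] [BaireSpace H]

/-- Pettis' theorem: if `A` is Baire measurable and nonmeagre in a topological group, then
`A * A⁻¹` is a neighborhood of `1`. -/
lemma pettis_nhds_one {A : Set H} (hBM : BaireMeasurableSet A) (hnm : ¬ IsMeagre A) :
    A * A⁻¹ ∈ 𝓝 (1 : H) := by
  obtain ⟨U, hUopen, hAU⟩ := hBM.residualEq_isOpen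
  have hsym : IsMeagre {x | ¬ ((x ∈ A) = (x ∈ U))} := by
    have hc : {x | ¬ ((x ∈ A) = (x ∈ U))}ᶜ = {x | (x ∈ A) = (x ∈ U)} := by ext x; simp
    rw [IsMeagre, hc]
    exact hAU
  have hUne : U.Nonempty := by
    rcases U.eq_empty_or_nonempty with rfl | hne
    · exact absurd (hsym.mono fun x hx => by simp [hx]) hnm
    · exact hne
  have hsub : U * U⁻¹ ⊆ A * A⁻¹ := by
    rintro x hx
    rw [Set.mem_mul] at hx
    obtain ⟨u, hu, v, hv, rfl⟩ := hx
    rw [Set.mem_inv] at hv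
    -- the open set U ∩ (x • U) contains u, hence is nonempty
    set e : H ≃ₜ H := Homeomorph.mulLeft (u * v)
    set m : Set H := {x | ¬ ((x ∈ A) = (x ∈ U))} ∪ e '' {x | ¬ ((x ∈ A) = (x ∈ U))} with hm
    have hmmeagre : IsMeagre m := by
      rw [hm, union_eq_iUnion]
      refine isMeagre_iUnion' ?_
      rintro (_ | _)
      · exact e.isMeagre_image hsym
      · exact hsym
    have hOopen : IsOpen (U ∩ e '' U) := hUopen.inter (e.isOpenMap U hUopen)
    have hOne : (U ∩ e '' U).Nonempty := ⟨u, hu, v⁻¹, hv, by simp [e]⟩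
    obtain ⟨a, haO, ham⟩ : ((U ∩ e '' U) \ m).Nonempty := by
      have hdense : Dense mᶜ := dense_of_mem_residual hmmeagre
      obtain ⟨a, ha⟩ := hdense.inter_open_nonempty _ hOopen hOne
      exact ⟨a, ha.1, ha.2⟩
    have haA : a ∈ A := by
      by_contra hc
      exact ham (Or.inl (by simp [hc, haO.1]))
    obtain ⟨w, hwU, hwa⟩ := haO.2
    have hwA : w ∈ A := by
      by_contra hc
      refine ham (Or.inr ⟨w, by simp [hc, hwU], hwa⟩)
    rw [Set.mem_mul]
    refine ⟨a, haA, w⁻¹, by simpa using hwA, ?_⟩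
    have : a = u * v * w := hwa.symm
    rw [this]
    group
  have : (1 : H) ∈ U * U⁻¹ := by
    obtain ⟨u, hu⟩ := hUne
    rw [Set.mem_mul]
    exact ⟨u, hu, u⁻¹, by simpa using hu, by simp⟩
  exact Filter.mem_of_superset ((hUopen.mul_right).mem_nhds this) hsub

end Pettis

section Main

lemma image_nhds_one_aux {G : Type*} [Group G] [TopologicalSpace G] [IsTopologicalGroup G]
    [TopologicalSpace.SeparableSpace G]
    {H : Type*} [Group H] [TopologicalSpace H] [IsTopologicalGroup H] [PolishSpace H]
    (h : G →* H) (hsurj : Function.Surjective h)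
    (hana : ∀ V : Set G, IsClosed V → MeasureTheory.AnalyticSet (h '' V))
    {W : Set G} (hW : W ∈ 𝓝 1) : h '' W ∈ 𝓝 (1 : H) := by
  haveI : BaireSpace H := by letI := upgradeIsCompletelyMetrizable H; infer_instance
  obtain ⟨V, hV, hVclosed, hVsymm, hVW⟩ := exists_closed_nhds_one_inv_eq_mul_subset hW
  obtain ⟨D, Dcount, Ddense⟩ := TopologicalSpace.exists_countable_dense G
  haveI : Countable D := Dcount.to_subtype
  have hcover : ∀ g : G, ∃ d ∈ D, ∃ v ∈ V, g = d * v := by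
    intro g
    have h1V : (1 : G) ∈ interior V := mem_interior_iff_mem_nhds.2 hV
    have hopen : IsOpen ((g * ·) '' interior V) := (isOpenMap_mul_left g) _ isOpen_interior
    have hne : ((g * ·) '' interior V).Nonempty := ⟨g, 1, h1V, by simp⟩
    obtain ⟨d, hd1, hdD⟩ := Ddense.inter_open_nonempty _ hopen hne
    obtain ⟨w, hw, hdw⟩ := hd1
    refine ⟨d, hdD, (g⁻¹ * d)⁻¹, ?_, by group⟩
    rw [← hVsymm, Set.mem_inv]
    have : g⁻¹ * d = w := by rw [← hdw]; group
    rw [this]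
    simpa using interior_subset hw
  set A : Set H := h '' V with hA
  have hnonmeagre : ¬ IsMeagre A := by
    intro hmeagre
    apply not_isMeagre_univ (X := H)
    have hcov : (univ : Set H) ⊆ ⋃ d : D, (Homeomorph.mulLeft (h d)) '' A := by
      intro y _
      obtain ⟨g, rfl⟩ := hsurj y
      obtain ⟨d, hdD, v, hvV, rfl⟩ := hcover g
      exact mem_iUnion.2 ⟨⟨d, hdD⟩, h v, ⟨v, hvV, rfl⟩, by simp⟩
    exact (isMeagre_iUnion' fun d : D => (Homeomorph.mulLeft (h (d : G))).isMeagre_image hmeagre).mono hcov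
  have hBM : BaireMeasurableSet A := (hana V hVclosed).baireMeasurableSet
  have hpettis := pettis_nhds_one hBM hnonmeagre
  have hAinv : A⁻¹ = h '' V := by
    ext y
    rw [Set.mem_inv]
    constructor
    · rintro ⟨v, hv, hvy⟩
      refine ⟨v⁻¹, ?_, by rw [map_inv, hvy]; simp⟩
      rw [← hVsymm, Set.mem_inv]; simpa using hv
    · rintro ⟨v, hv, rfl⟩
      refine ⟨v⁻¹, ?_, by simp⟩
      rw [← hVsymm, Set.mem_inv]; simpa using hv
  have hsub : A * A⁻¹ ⊆ h '' W := by
    rw [hAinv]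
    rintro y hy
    rw [Set.mem_mul] at hy
    obtain ⟨a, ⟨va, hva, rfl⟩, b, ⟨vb, hvb, rfl⟩, rfl⟩ := hy
    exact ⟨va * vb, hVW (Set.mul_mem_mul hva hvb), by rw [map_mul]⟩
  exact Filter.mem_of_superset hpettis hsub

end Main



/-- Open Mapping Principle: any continuous surjective group homomorphism from an analytic
topological group onto a Polish group is open. -/
theorem isOpenMap_of_continuous_surjective_analytic_to_polish
    {G : Type*} [Group G] [TopologicalSpace G] [IsTopologicalGroup G]
    (hG : IsAnalyticSpace G)
    {H : Type*} [Group H] [TopologicalSpace H] [IsTopologicalGroup H] [PolishSpace H]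
    (h : G →* H) (hcont : Continuous h) (hsurj : Function.Surjective h) :
    IsOpenMap h := by
  obtain ⟨hmetr, P, tP, hPol, f, hfcont, hfsurj⟩ := hG
  letI := tP
  haveI := hPol
  haveI : TopologicalSpace.SeparableSpace G := hfsurj.denseRange.separableSpace hfcont
  have hana : ∀ V : Set G, IsClosed V → MeasureTheory.AnalyticSet (h '' V) := by
    intro V hVcl
    haveI : PolishSpace (f ⁻¹' V) := (hVcl.preimage hfcont).polishSpace
    have himg : h '' V = range (fun p : (f ⁻¹' V) => h (f p)) := by
      have : range (fun p : (f ⁻¹' V) => h (f p)) = (fun x => h (f x)) '' (f ⁻¹' V) := by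
        rw [Set.image_eq_range]
      rw [this, show (fun x => h (f x)) = h ∘ f from rfl, Set.image_comp,
        Set.image_preimage_eq_of_subset]
      intro x _
      exact hfsurj x
    rw [himg]
    exact MeasureTheory.analyticSet_range_of_polishSpace
      ((hcont.comp hfcont).comp continuous_subtype_val)
  have key : ∀ W ∈ 𝓝 (1 : G), h '' W ∈ 𝓝 (1 : H) :=
    fun W hW => image_nhds_one_aux h hsurj hana hW
  rw [isOpenMap_iff_nhds_le]
  intro g
  rw [Filter.le_map_iff]
  intro s hs
  have h1 : (g⁻¹ * ·) '' s ∈ 𝓝 (1 : G) := by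
    have := (isOpenMap_mul_left g⁻¹).image_mem_nhds hs
    simpa using this
  have h2 := key _ h1
  have h3 : (h g * ·) '' (h '' ((g⁻¹ * ·) '' s)) ∈ 𝓝 (h g) := by
    have := (isOpenMap_mul_left (h g)).image_mem_nhds h2
    simpa using this
  have heq : (h g * ·) '' (h '' ((g⁻¹ * ·) '' s)) = h '' s := by
    rw [← Set.image_comp, ← Set.image_comp]
    apply Set.image_congr
    intro a _
    simp [map_mul, map_inv, ← mul_assoc]
  rwa [heq] at h3
end

section
/- Let n be a positive integer and let [a_{ij}] be an n × n doubly stochastic matrix of real numbers, i.e. a_{ij} ≥ 0 for all i, j and the sum of every row and of every column equals 1. Then there exists a permutation σ of {1,…,n} such that a_{i,σ(i)} > 0 for every i ∈ {1,…,n}. -/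
open Finset in
/-- Every doubly stochastic `n × n` matrix has a positive diagonal: there is a
permutation `σ` with `a i (σ i) > 0` for all `i`. -/
theorem doublyStochastic_exists_positive_diagonal (n : ℕ) (hn : 0 < n)
    (a : Fin n → Fin n → ℝ)
    (hnn : ∀ i j, 0 ≤ a i j)
    (hrow : ∀ i, ∑ j, a i j = 1)
    (hcol : ∀ j, ∑ i, a i j = 1) :
    ∃ σ : Equiv.Perm (Fin n), ∀ i, 0 < a i (σ i) := by
  have hM : (Matrix.of a) ∈ doublyStochastic ℝ (Fin n) := by
    rw [mem_doublyStochastic_iff_sum]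
    exact ⟨fun i j => hnn i j, hrow, hcol⟩
  obtain ⟨w, hw0, hw1, hw2⟩ := exists_eq_sum_perm_of_mem_doublyStochastic hM
  have : ∃ σ : Equiv.Perm (Fin n), 0 < w σ := by
    by_contra h
    push_neg at h
    have : ∑ σ : Equiv.Perm (Fin n), w σ = 0 :=
      Finset.sum_eq_zero fun σ _ => le_antisymm (h σ) (hw0 σ)
    simp [this] at hw1
  obtain ⟨σ, hσ⟩ := this
  refine ⟨σ, fun i => ?_⟩
  have key : w σ ≤ a i (σ i) := by
    have := congrFun (congrFun hw2 i) (σ i)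
    simp only [Matrix.sum_apply, Matrix.smul_apply, smul_eq_mul] at this
    rw [Matrix.of_apply] at this
    rw [← this]
    have h1 : w σ * (σ.permMatrix ℝ) i (σ i) = w σ := by
      simp [Equiv.Perm.permMatrix, PEquiv.toMatrix_apply, Equiv.toPEquiv_apply]
    calc w σ = w σ * (σ.permMatrix ℝ) i (σ i) := h1.symm
      _ ≤ ∑ σ' : Equiv.Perm (Fin n), w σ' * (σ'.permMatrix ℝ) i (σ i) := by
          refine Finset.single_le_sum (f := fun σ' => w σ' * (σ'.permMatrix ℝ) i (σ i))
            (fun σ' _ => mul_nonneg (hw0 σ') ?_) (Finset.mem_univ σ)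
          simp only [Equiv.Perm.permMatrix, PEquiv.toMatrix_apply, Equiv.toPEquiv_apply]
          positivity
  linarith
end
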